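/- arXiv:2501.15026 — 7 statements merged into one kernel-verified Lean document; each statement's English description precedes it below -/
import Mathlib

section
/- Let 0 < R < π, let c = 4 cot²(R/2) log cos(R/2), and define u : (0, R] → ℝ by u(r) = 2(log cos(r/2))² − 2(log cos(R/2))² + Li₂(−tan²(r/2)) − Li₂(−tan²(R/2)) + c·log( cos(r/2)/cos(R/2) ). For a differentiable function f on (0,R) define (Lf)(r) = (1/sin r)·d/dr( sin r · f′(r) ). Then L(Lu)(r) = 1 for all r ∈ (0, R), and u(R) = 0 and u′(R) = 0. -/
open MeasureTheory Real

/-- The dilogarithm, defined for real `x ≤ 1` by `Li₂(x) = −∫₀ˣ log(1−t)/t dt`. -/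
noncomputable def Li2 (x : ℝ) : ℝ := - ∫ t in (0:ℝ)..x, Real.log (1 - t) / t

/-- The Laplace–Beltrami operator on the unit 2-sphere acting on functions of the
geodesic distance `r` from the north pole: `(Lf)(r) = (1/sin r) (sin r · f′(r))′`. -/
noncomputable def sphLap (f : ℝ → ℝ) (r : ℝ) : ℝ :=
  (1 / Real.sin r) * deriv (fun s => Real.sin s * deriv f s) r

/-!
Writing `w(r) = log cos(r/2)`, one has `w′ = -tan(r/2)/2` and, since `1 + tan² = 1/cos²`,
`Li₂(-tan²(r/2))′ = 2w(1 + tan²(r/2))/tan(r/2)`. Hence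
`u′ = 2w/tan(r/2) - (c/2) tan(r/2)` and the flux is `sin r · u′ = 2w(1 + cos r) - (c/2)(1 - cos r)`,
so `Lu = -1 - 2w - c/2`. Then `sin r · (Lu)′ = sin r · tan(r/2) = 1 - cos r`, whose derivative
is `sin r`, so `L(Lu) = 1`. The constant `c` is exactly the one making `u′(R) = 0`.
-/

open MeasureTheory Real Filter Topology Set

lemma intervalIntegrable_log_one_sub_div {x : ℝ} (hx : x < 0) :
    IntervalIntegrable (fun t => log (1 - t) / t) volume 0 x := by
  rw [intervalIntegrable_iff, uIoc_of_ge hx.le]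
  refine Integrable.mono' (g := fun _ => (1 : ℝ)) (integrableOn_const measure_Ioc_lt_top.ne)
    ((measurable_log.comp (measurable_const.sub measurable_id)).div
      measurable_id).aestronglyMeasurable.restrict ?_
  rw [ae_restrict_iff' measurableSet_Ioc]
  refine Eventually.of_forall fun t ht => ?_
  rcases ht.2.eq_or_lt with rfl | ht0
  · simp
  have hlog_nonneg : 0 ≤ log (1 - t) := log_nonneg (by linarith)
  have hlog_le : log (1 - t) ≤ -t := by linarith [log_le_sub_one_of_pos (x := 1 - t) (by linarith)]
  rw [norm_eq_abs, abs_div, abs_of_nonneg hlog_nonneg, abs_of_neg ht0, div_le_one (by linarith)]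
  exact hlog_le

lemma hasDerivAt_Li2 {x : ℝ} (hx : x < 0) : HasDerivAt Li2 (-(log (1 - x) / x)) x := by
  have hcont : ContinuousOn (fun t : ℝ => log (1 - t) / t) (Iio 0) := fun t (ht : t < 0) =>
    (ContinuousAt.log (f := fun t => 1 - t) (by fun_prop) (by linarith)).continuousWithinAt.div
      continuousWithinAt_id ht.ne
  exact (intervalIntegral.integral_hasDerivAt_right (intervalIntegrable_log_one_sub_div hx)
    (hcont.stronglyMeasurableAtFilter isOpen_Iio x hx)
    (hcont.continuousAt (isOpen_Iio.mem_nhds hx))).neg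

lemma cos_half_pos {x : ℝ} (h₁ : -π < x) (h₂ : x < π) : 0 < cos (x / 2) :=
  cos_pos_of_mem_Ioo ⟨by linarith, by linarith⟩

lemma tan_half_pos {x : ℝ} (h₀ : 0 < x) (h₁ : x < π) : 0 < tan (x / 2) :=
  tan_pos_of_pos_of_lt_pi_div_two (by linarith) (by linarith)

-- `tan x = sin x / cos x` is the junk value `0` where `cos x = 0`.
lemma cos_ne_zero_of_tan_ne_zero {x : ℝ} (h : tan x ≠ 0) : cos x ≠ 0 := by
  contrapose! h
  rw [tan_eq_sin_div_cos, h, div_zero]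

lemma log_one_add_tan_sq {x : ℝ} (hx : cos x ≠ 0) : log (1 + tan x ^ 2) = -2 * log (cos x) := by
  rw [← inv_inv (1 + tan x ^ 2), inv_one_add_tan_sq hx, log_inv, log_pow]
  push_cast
  ring

lemma tan_half_mul_one_add_cos (x : ℝ) : tan (x / 2) * (1 + cos x) = sin x := by
  obtain ⟨y, rfl⟩ : ∃ y, x = 2 * y := ⟨x / 2, by ring⟩
  rw [show 2 * y / 2 = y by ring, cos_two_mul, sin_two_mul, tan_eq_sin_div_cos]
  rcases eq_or_ne (cos y) 0 with h | h
  · simp [h]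
  · field_simp
    ring

lemma sin_div_tan_half {x : ℝ} (h : tan (x / 2) ≠ 0) : sin x / tan (x / 2) = 1 + cos x := by
  rw [div_eq_iff h, ← tan_half_mul_one_add_cos]
  ring

lemma sin_mul_tan_half {x : ℝ} (h : cos (x / 2) ≠ 0) : sin x * tan (x / 2) = 1 - cos x := by
  obtain ⟨y, rfl⟩ : ∃ y, x = 2 * y := ⟨x / 2, by ring⟩
  rw [show 2 * y / 2 = y by ring] at h ⊢
  rw [cos_two_mul, sin_two_mul, tan_eq_sin_div_cos]
  field_simp
  linear_combination 2 * sin_sq_add_cos_sq y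

lemma hasDerivAt_half (r : ℝ) : HasDerivAt (fun s : ℝ => s / 2) (1 / 2) r :=
  (hasDerivAt_id' r).div_const 2

lemma hasDerivAt_tan_half {r : ℝ} (hr : cos (r / 2) ≠ 0) :
    HasDerivAt (fun s => tan (s / 2)) ((1 + tan (r / 2) ^ 2) / 2) r := by
  have h : HasDerivAt (fun s => tan (s / 2)) (1 / cos (r / 2) ^ 2 * (1 / 2)) r :=
    (hasDerivAt_tan hr).comp (h := fun s => s / 2) r (hasDerivAt_half r)
  rwa [one_div (cos _ ^ 2), ← inv_one_add_tan_sq hr, inv_inv, ← div_eq_mul_one_div] at h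

lemma hasDerivAt_log_cos_half {r : ℝ} (hr : cos (r / 2) ≠ 0) :
    HasDerivAt (fun s => log (cos (s / 2))) (-tan (r / 2) / 2) r := by
  have h : HasDerivAt (fun s => cos (s / 2)) (-sin (r / 2) * (1 / 2)) r :=
    (hasDerivAt_cos (r / 2)).comp (h := fun s => s / 2) r (hasDerivAt_half r)
  convert h.log hr using 1
  rw [tan_eq_sin_div_cos]
  ring

lemma hasDerivAt_Li2_neg_tan_half_sq {r : ℝ} (hr : tan (r / 2) ≠ 0) :
    HasDerivAt (fun s => Li2 (-tan (s / 2) ^ 2))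
      (2 * log (cos (r / 2)) * (1 + tan (r / 2) ^ 2) / tan (r / 2)) r := by
  have hcos := cos_ne_zero_of_tan_ne_zero hr
  have h := (hasDerivAt_Li2 (neg_neg_of_pos ((sq_pos_of_ne_zero hr)))).comp r
    ((hasDerivAt_tan_half hcos).pow 2).neg
  refine h.congr_deriv ?_
  rw [sub_neg_eq_add, log_one_add_tan_sq hcos]
  field_simp
  ring

noncomputable def plateProfile (c s : ℝ) : ℝ :=
  2 * log (cos (s / 2)) ^ 2 + Li2 (-tan (s / 2) ^ 2) + c * log (cos (s / 2))

lemma hasDerivAt_plateProfile (c : ℝ) {r : ℝ} (hr : tan (r / 2) ≠ 0) :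
    HasDerivAt (plateProfile c) (2 * log (cos (r / 2)) / tan (r / 2) - c / 2 * tan (r / 2)) r := by
  have hlog := hasDerivAt_log_cos_half (cos_ne_zero_of_tan_ne_zero hr)
  refine (((hlog.pow 2).const_mul 2).add (hasDerivAt_Li2_neg_tan_half_sq hr)
    |>.add (hlog.const_mul c)).congr_deriv ?_
  field_simp
  ring

lemma sin_mul_deriv_plateProfile (c : ℝ) {r : ℝ} (hr : tan (r / 2) ≠ 0) :
    sin r * deriv (plateProfile c) r =
      2 * log (cos (r / 2)) * (1 + cos r) - c / 2 * (1 - cos r) := by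
  rw [(hasDerivAt_plateProfile c hr).deriv]
  linear_combination 2 * log (cos (r / 2)) * sin_div_tan_half hr
    - c / 2 * sin_mul_tan_half (cos_ne_zero_of_tan_ne_zero hr)

lemma sphLap_eq_of_eventually_sin_mul_deriv_eq {f g : ℝ → ℝ} {g' r : ℝ}
    (hf : ∀ᶠ s in 𝓝 r, sin s * deriv f s = g s) (hg : HasDerivAt g g' r) :
    sphLap f r = g' / sin r := by
  have hflux : (fun s => sin s * deriv f s) =ᶠ[𝓝 r] g := hf
  rw [sphLap, hflux.deriv_eq, hg.deriv, one_div_mul_eq_div]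

lemma Filter.EventuallyEq.sphLap {f g : ℝ → ℝ} {r : ℝ} (h : f =ᶠ[𝓝 r] g) :
    _root_.sphLap f =ᶠ[𝓝 r] _root_.sphLap g := by
  filter_upwards [h.eventuallyEq_nhds] with s hs
  have hflux : (fun t => sin t * deriv f t) =ᶠ[𝓝 s] fun t => sin t * deriv g t := by
    filter_upwards [hs.deriv] with t ht
    rw [ht]
  rw [_root_.sphLap, _root_.sphLap, hflux.deriv_eq]

lemma sphLap_sub_const (f : ℝ → ℝ) (k : ℝ) : sphLap (fun s => f s - k) = sphLap f := by
  funext r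
  simp only [sphLap, deriv_sub_const]

lemma sphLap_plateProfile (c : ℝ) {r : ℝ} (h₀ : 0 < r) (h₁ : r < π) :
    sphLap (plateProfile c) r = -1 - 2 * log (cos (r / 2)) - c / 2 := by
  have hflux : ∀ᶠ s in 𝓝 r, sin s * deriv (plateProfile c) s =
      2 * log (cos (s / 2)) * (1 + cos s) - c / 2 * (1 - cos s) := by
    filter_upwards [Ioo_mem_nhds h₀ h₁] with s hs
    exact sin_mul_deriv_plateProfile c (tan_half_pos hs.1 hs.2).ne'
  have hlog := hasDerivAt_log_cos_half (cos_half_pos (by linarith) h₁).ne'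
  have hg := ((hlog.const_mul 2).mul ((hasDerivAt_cos r).const_add 1)).sub
    (((hasDerivAt_cos r).const_sub 1).const_mul (c / 2))
  rw [sphLap_eq_of_eventually_sin_mul_deriv_eq hflux hg]
  have hsin : sin r ≠ 0 := (sin_pos_of_pos_of_lt_pi h₀ h₁).ne'
  field_simp
  linear_combination (-2) * tan_half_mul_one_add_cos r

lemma sphLap_sphLap_plateProfile (c : ℝ) {r : ℝ} (h₀ : 0 < r) (h₁ : r < π) :
    sphLap (sphLap (plateProfile c)) r = 1 := by
  have hLu : sphLap (plateProfile c) =ᶠ[𝓝 r] fun s => -1 - 2 * log (cos (s / 2)) - c / 2 := by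
    filter_upwards [Ioo_mem_nhds h₀ h₁] with s hs
    exact sphLap_plateProfile c hs.1 hs.2
  have hflux : ∀ᶠ s in 𝓝 r, sin s * deriv (fun s => -1 - 2 * log (cos (s / 2)) - c / 2) s =
      1 - cos s := by
    filter_upwards [Ioo_mem_nhds h₀ h₁] with s hs
    have hcos := (cos_half_pos (by linarith [hs.1]) hs.2).ne'
    rw [((((hasDerivAt_log_cos_half hcos).const_mul 2).const_sub (-1)).sub_const (c / 2)).deriv,
      ← sin_mul_tan_half hcos]
    ring
  rw [hLu.sphLap.eq_of_nhds, sphLap_eq_of_eventually_sin_mul_deriv_eq hflux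
    ((hasDerivAt_cos r).const_sub 1), neg_neg, div_self (sin_pos_of_pos_of_lt_pi h₀ h₁).ne']

/-- The explicit radial function `u` on the spherical cap of geodesic radius `R < π`
solves the clamped-plate equation `Δ²u = 1` on `(0,R)` with clamped boundary
conditions `u(R) = 0` and `u′(R) = 0`. -/
theorem stmt_3 (R : ℝ) (hR0 : 0 < R) (hRπ : R < π)
    (c : ℝ) (hc : c = 4 * (Real.cos (R/2) / Real.sin (R/2))^2 * Real.log (Real.cos (R/2)))
    (u : ℝ → ℝ)
    (hu : ∀ r, u r = 2 * (Real.log (Real.cos (r/2)))^2 - 2 * (Real.log (Real.cos (R/2)))^2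
        + Li2 (-(Real.tan (r/2))^2) - Li2 (-(Real.tan (R/2))^2)
        + c * Real.log (Real.cos (r/2) / Real.cos (R/2))) :
    (∀ r ∈ Set.Ioo (0:ℝ) R, sphLap (sphLap u) r = 1) ∧ u R = 0 ∧ deriv u R = 0 := by
  have hcosR : 0 < cos (R / 2) := cos_half_pos (by linarith) hRπ
  have hu_eq : ∀ s, cos (s / 2) ≠ 0 → u s = plateProfile c s - plateProfile c R := by
    intro s hs
    rw [hu, log_div hs hcosR.ne', plateProfile, plateProfile]
    ring
  have hu_nhds : ∀ r, 0 < r → r < π → u =ᶠ[𝓝 r] fun s => plateProfile c s - plateProfile c R := by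
    intro r h₀ h₁
    filter_upwards [Ioo_mem_nhds h₀ h₁] with s hs
    exact hu_eq s (cos_half_pos (by linarith [hs.1]) hs.2).ne'
  refine ⟨fun r hr => ?_, by rw [hu_eq R hcosR.ne', sub_self], ?_⟩
  · have hrπ := hr.2.trans hRπ
    rw [(hu_nhds r hr.1 hrπ).sphLap.sphLap.eq_of_nhds, sphLap_sub_const]
    exact sphLap_sphLap_plateProfile c hr.1 hrπ
  · rw [(hu_nhds R hR0 hRπ).deriv_eq, deriv_sub_const,
      (hasDerivAt_plateProfile c (tan_half_pos hR0 hRπ).ne').deriv, hc, tan_eq_sin_div_cos]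
    have hsinR : sin (R / 2) ≠ 0 := (sin_pos_of_pos_of_lt_pi (by linarith) (by linarith)).ne'
    field_simp
    ring
end

section
/- Let N ≥ 1 be an integer and R > 0, and define E : [0, R] → ℝ by E(a) = −(ω_{N−1}/2) · (2(N+2) R^N a^{N+4} − (N+4) a^{2(N+2)}) / (N³ (N+2)² (N+4) R^N). Then for every a ∈ (0, R), E is differentiable at a with E′(a) = −ω_{N−1} · (R^N − a^N) a^{N+3} / (N³ (N+2) R^N) < 0; consequently E is strictly decreasing on [0, R]. -/
/-! The numerator `2(N+2)R^N a^{N+4} − (N+4)a^{2(N+2)}` of `E` has derivative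
`2(N+2)(N+4) a^{N+3}(R^N − a^N)`, which is positive on `(0, R)`; since the prefactor
`−ω/2` is negative, `E′ < 0` there and the mean value theorem gives strict decrease on `[0, R]`. -/

open MeasureTheory Real

/-- The Laplacian of `f : ℝ^N → ℝ`: the sum of the second partial derivatives
`∑ i, ∂²f/∂xᵢ²` (the trace of the Hessian). -/
noncomputable def laplacian {N : ℕ} (f : EuclideanSpace ℝ (Fin N) → ℝ)
    (x : EuclideanSpace ℝ (Fin N)) : ℝ :=
  ∑ i : Fin N, fderiv ℝ (fun y => fderiv ℝ f y (EuclideanSpace.single i 1)) x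
    (EuclideanSpace.single i 1)

open Set

theorem hasDerivAt_two_ball_energy_numerator (n : ℕ) (c x : ℝ) :
    HasDerivAt
      (fun y : ℝ => 2 * ((n : ℝ) + 2) * c * y ^ (n + 4) - ((n : ℝ) + 4) * y ^ (2 * (n + 2)))
      (2 * ((n : ℝ) + 2) * ((n : ℝ) + 4) * x ^ (n + 3) * (c - x ^ n)) x := by
  refine (((hasDerivAt_pow (n + 4) x).const_mul (2 * ((n : ℝ) + 2) * c)).sub
    ((hasDerivAt_pow (2 * (n + 2)) x).const_mul ((n : ℝ) + 4))).congr_deriv ?_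
  rw [show n + 4 - 1 = n + 3 by omega, show 2 * (n + 2) - 1 = n + 3 + n by omega]
  push_cast
  ring

theorem stmt_5_general (N : ℕ) (hN : 1 ≤ N) (R : ℝ)
    (ω : ℝ) (hω : ω = (N : ℝ) * (volume (Metric.ball (0 : EuclideanSpace ℝ (Fin N)) 1)).toReal)
    (E : ℝ → ℝ)
    (hE : ∀ a, E a = -(ω/2) * (2*((N:ℝ)+2)*R^N*a^(N+4) - ((N:ℝ)+4)*a^(2*(N+2))) /
        ((N:ℝ)^3 * ((N:ℝ)+2)^2 * ((N:ℝ)+4) * R^N)) :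
    (∀ a ∈ Set.Ioo (0:ℝ) R,
        HasDerivAt E (-(ω * (R^N - a^N) * a^(N+3)) / ((N:ℝ)^3 * ((N:ℝ)+2) * R^N)) a ∧
        -(ω * (R^N - a^N) * a^(N+3)) / ((N:ℝ)^3 * ((N:ℝ)+2) * R^N) < 0) ∧
    StrictAntiOn E (Set.Icc 0 R) := by
  have hN₀ : (0 : ℝ) < N := by exact_mod_cast hN
  have hω₀ : 0 < ω := hω ▸ mul_pos hN₀ (ENNReal.toReal_pos
    (Metric.measure_ball_pos volume 0 one_pos).ne' measure_ball_lt_top.ne)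
  have hE_deriv : ∀ a ∈ Ioo 0 R,
      HasDerivAt E (-(ω * (R^N - a^N) * a^(N+3)) / ((N:ℝ)^3 * ((N:ℝ)+2) * R^N)) a ∧
      -(ω * (R^N - a^N) * a^(N+3)) / ((N:ℝ)^3 * ((N:ℝ)+2) * R^N) < 0 := by
    rintro a ⟨ha₀, haR⟩
    have hR : 0 < R := ha₀.trans haR
    have hgap : 0 < R ^ N - a ^ N := sub_pos.2 (pow_lt_pow_left₀ haR ha₀.le (by omega))
    refine ⟨?_, by rw [neg_div, neg_lt_zero]; positivity⟩
    rw [funext hE]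
    refine (((hasDerivAt_two_ball_energy_numerator N (R ^ N) a).const_mul (-(ω / 2))).div_const
      ((N:ℝ)^3 * ((N:ℝ)+2)^2 * ((N:ℝ)+4) * R^N)).congr_deriv ?_
    field_simp
  refine ⟨hE_deriv, ?_⟩
  have hE_cont : Continuous E := by
    rw [funext hE]
    fun_prop
  rw [← interior_Icc] at hE_deriv
  exact strictAntiOn_of_hasDerivWithinAt_neg (convex_Icc 0 R) hE_cont.continuousOn
    (fun a ha => (hE_deriv a ha).1.hasDerivWithinAt) (fun a ha => (hE_deriv a ha).2)

/-- The explicit Euclidean two-ball auxiliary energy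
`E(a) = −(ω/2)(2(N+2)R^N a^{N+4} − (N+4)a^{2(N+2)})/(N³(N+2)²(N+4)R^N)`
(where `ω = ω_{N−1} = N · volume(unit ball)`) has derivative
`E′(a) = −ω(R^N − a^N)a^{N+3}/(N³(N+2)R^N) < 0` for `a ∈ (0,R)`, and hence is
strictly decreasing on `[0,R]`. -/
theorem stmt_5 (N : ℕ) (hN : 1 ≤ N) (R : ℝ) (hR : 0 < R)
    (ω : ℝ) (hω : ω = (N : ℝ) * (volume (Metric.ball (0 : EuclideanSpace ℝ (Fin N)) 1)).toReal)
    (E : ℝ → ℝ)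
    (hE : ∀ a, E a = -(ω/2) * (2*((N:ℝ)+2)*R^N*a^(N+4) - ((N:ℝ)+4)*a^(2*(N+2))) /
        ((N:ℝ)^3 * ((N:ℝ)+2)^2 * ((N:ℝ)+4) * R^N)) :
    (∀ a ∈ Set.Ioo (0:ℝ) R,
        HasDerivAt E (-(ω * (R^N - a^N) * a^(N+3)) / ((N:ℝ)^3 * ((N:ℝ)+2) * R^N)) a ∧
        -(ω * (R^N - a^N) * a^(N+3)) / ((N:ℝ)^3 * ((N:ℝ)+2) * R^N) < 0) ∧
    StrictAntiOn E (Set.Icc 0 R) :=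
  stmt_5_general N hN R ω hω E hE
end

section
/- For every real a with 0 < a < π, one has 1 − cos a + 4 log cos(a/2) < 0. -/
open Real

/-- Key elementary inequality for the spherical two-ball energy:
`1 − cos a + 4 log cos(a/2) < 0` for `0 < a < π`. -/
theorem stmt_7 (a : ℝ) (h0 : 0 < a) (hπ : a < π) :
    1 - Real.cos a + 4 * Real.log (Real.cos (a/2)) < 0 := by
  set c := Real.cos (a/2) with hc
  have hpos : 0 < c := Real.cos_pos_of_mem_Ioo
    ⟨by linarith [Real.pi_pos], by linarith⟩
  have hlt1 : c < 1 := by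
    have := Real.cos_lt_cos_of_nonneg_of_le_pi (le_refl 0)
      (by linarith : a/2 ≤ π) (by positivity : (0:ℝ) < a/2)
    simpa [hc] using this
  have hlog : Real.log c < c - 1 := Real.log_lt_sub_one_of_pos hpos (by linarith)
  have hcos : Real.cos a = 2 * c ^ 2 - 1 := by
    rw [hc, ← Real.cos_two_mul]; ring_nf
  nlinarith [sq_nonneg (c - 1)]
end

section
/- For every real a > 0, one has 1 − cosh a + 4 log cosh(a/2) < 0. -/
open Real

/-- Key elementary inequality for the hyperbolic two-ball energy:
`1 − cosh a + 4 log cosh(a/2) < 0` for `a > 0`. -/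
theorem stmt_9 (a : ℝ) (h0 : 0 < a) :
    1 - Real.cosh a + 4 * Real.log (Real.cosh (a/2)) < 0 := by
  have hc : 1 < Real.cosh (a/2) := by
    have := Real.one_lt_cosh.mpr (by positivity : a/2 ≠ 0)
    linarith
  have hlog : Real.log (Real.cosh (a/2)) ≤ Real.cosh (a/2) - 1 :=
    Real.log_le_sub_one_of_pos (by linarith)
  have hcosh : Real.cosh a = Real.cosh (a/2) ^ 2 + Real.sinh (a/2) ^ 2 := by
    rw [← Real.cosh_two_mul]; ring_nf
  have hsq := Real.cosh_sq (a/2)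
  nlinarith [sq_nonneg (Real.cosh (a/2) - 1)]
end

section
/- Let R > 0, let Ω ⊆ ℝ be an open set with Lebesgue measure 2R, and let ρ : ℝ → ℝ be a measurable function with |ρ(x)| ≤ 1 for all x. Then for every infinitely differentiable function v : ℝ → ℝ with compact support contained in Ω, one has (1/2)∫_ℝ (v″)² dx − ∫_ℝ ρ v dx ≥ − R⁵ / 45. -/
open MeasureTheory Real intervalIntegral

lemma ipoly5 (x y c0 c1 c2 c3 c4 c5 : ℝ) (q : ℝ → ℝ)
    (hq : ∀ t, q t = c0 + c1*t + c2*t^2 + c3*t^3 + c4*t^4 + c5*t^5) :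
    ∫ t in x..y, q t = c0*(y-x) + c1*(y^2-x^2)/2 + c2*(y^3-x^3)/3
      + c3*(y^4-x^4)/4 + c4*(y^5-x^5)/5 + c5*(y^6-x^6)/6 := by
  have h : ∀ t : ℝ, HasDerivAt (fun t : ℝ => c0*t + c1*t^2/2 + c2*t^3/3 + c3*t^4/4
      + c4*t^5/5 + c5*t^6/6) (q t) t := by
    intro t
    rw [hq]
    have h1 : HasDerivAt (fun t : ℝ => c0*t + c1*t^2/2 + c2*t^3/3 + c3*t^4/4
        + c4*t^5/5 + c5*t^6/6)
        (c0*1 + c1*(2*t)/2 + c2*(3*t^2)/3 + c3*(4*t^3)/4 + c4*(5*t^4)/5 + c5*(6*t^5)/6) t := by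
      have := (((((((hasDerivAt_id t).const_mul c0).add
        (((hasDerivAt_pow 2 t).const_mul c1).div_const 2)).add
        (((hasDerivAt_pow 3 t).const_mul c2).div_const 3)).add
        (((hasDerivAt_pow 4 t).const_mul c3).div_const 4)).add
        (((hasDerivAt_pow 5 t).const_mul c4).div_const 5)).add
        (((hasDerivAt_pow 6 t).const_mul c5).div_const 6))
      exact this.congr_deriv (by norm_num <;> ring)
    convert h1 using 1
    ring
  have hcont : IntervalIntegrable q volume x y := by
    apply Continuous.intervalIntegrable
    have : q = fun t => c0 + c1*t + c2*t^2 + c3*t^3 + c4*t^4 + c5*t^5 := funext hq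
    rw [this]; continuity
  rw [intervalIntegral.integral_eq_sub_of_hasDerivAt (fun t _ => h t) hcont]
  ring

lemma int_mul2 (x y p q r w : ℝ) :
    ∫ t in x..y, (p + q*t) * (r + w*t)
      = (p*r)*(y-x) + (p*w+q*r)*(y^2-x^2)/2 + (q*w)*(y^3-x^3)/3 := by
  rw [ipoly5 x y (p*r) (p*w+q*r) (q*w) 0 0 0 _ (fun t => by ring)]
  ring

lemma int_mul3 (x y p q r w e f : ℝ) :
    ∫ t in x..y, (p + q*t) * (r + w*t) * (e + f*t)
      = (p*r*e)*(y-x) + (p*r*f+p*w*e+q*r*e)*(y^2-x^2)/2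
        + (p*w*f+q*r*f+q*w*e)*(y^3-x^3)/3 + (q*w*f)*(y^4-x^4)/4 := by
  rw [ipoly5 x y (p*r*e) (p*r*f+p*w*e+q*r*e) (p*w*f+q*r*f+q*w*e) (q*w*f) 0 0 _
    (fun t => by ring)]
  ring

lemma pow5_sum {ι : Type*} (s : Finset ι) (f : ι → ℝ) (hf : ∀ i ∈ s, 0 ≤ f i) :
    ∑ i ∈ s, (f i)^5 ≤ (∑ i ∈ s, f i)^5 := by
  induction s using Finset.cons_induction with
  | empty => simp
  | cons i s his ih =>
    rw [Finset.sum_cons, Finset.sum_cons]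
    have h1 : 0 ≤ f i := hf i (Finset.mem_cons_self i s)
    have h2 : ∀ j ∈ s, 0 ≤ f j := fun j hj => hf j (Finset.mem_cons_of_mem hj)
    have h3 : 0 ≤ ∑ j ∈ s, f j := Finset.sum_nonneg h2
    have := ih h2
    have h4 : 0 ≤ f i * ∑ j ∈ s, f j := mul_nonneg h1 h3
    nlinarith [mul_nonneg (mul_nonneg h4 h1) h1, mul_nonneg h4 h4,
      mul_nonneg (mul_nonneg h4 h3) h3]

noncomputable def gA (a b s : ℝ) : ℝ :=
  (-(s-a)^2*(b-a)^2 + (s-a)^2*(2*(s-a)-3*(b-a))*(2*a+(b-a)))/(2*(b-a)^3)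

noncomputable def gB (a b s : ℝ) : ℝ := -((s-a)^2*(2*(s-a)-3*(b-a)))/(b-a)^3

noncomputable def gker (a b s t : ℝ) : ℝ := max (s-t) 0 + (gA a b s + gB a b s * t)

noncomputable def Fker (a b s u : ℝ) : ℝ :=
  (s-a)^2*(b-u)^2*(3*(u-a)*(b-a) - (s-a)*(b-a) - 2*(s-a)*(u-a))/(6*(b-a)^3)

noncomputable def Kker (a b s u : ℝ) : ℝ := if s ≤ u then Fker a b s u else Fker a b u s

lemma gker_left (a b s t : ℝ) (h : t ≤ s) :
    gker a b s t = (s + gA a b s) + (gB a b s - 1) * t := by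
  unfold gker
  rw [max_eq_left (by linarith)]
  ring

lemma gker_right (a b s t : ℝ) (h : s ≤ t) :
    gker a b s t = gA a b s + gB a b s * t := by
  unfold gker
  rw [max_eq_right (by linarith)]
  ring

lemma gker_cont (a b s : ℝ) : Continuous (fun t => gker a b s t) := by
  unfold gker
  fun_prop

lemma gker_cont2 (a b : ℝ) : Continuous (fun p : ℝ × ℝ => gker a b p.1 p.2) := by
  unfold gker gA gB
  fun_prop

/-- The kernel identity. -/
lemma kernel_eq (a b s u : ℝ) (hab : a < b) (has : a ≤ s) (hsu : s ≤ u) (hub : u ≤ b) :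
    ∫ t in a..b, gker a b s t * gker a b u t = Fker a b s u := by
  have hint : ∀ x y : ℝ, IntervalIntegrable (fun t => gker a b s t * gker a b u t) volume x y :=
    fun x y => (((gker_cont a b s).mul (gker_cont a b u))).intervalIntegrable x y
  rw [← integral_add_adjacent_intervals (b := s) (hint a s) (hint s b),
      ← integral_add_adjacent_intervals (b := u) (hint s u) (hint u b)]
  have e1 : ∫ t in a..s, gker a b s t * gker a b u t
      = ∫ t in a..s, ((s + gA a b s) + (gB a b s - 1)*t) * ((u + gA a b u) + (gB a b u - 1)*t) := by
    apply integral_congr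
    intro t ht
    rw [Set.uIcc_of_le has] at ht
    show gker a b s t * gker a b u t = _
    rw [gker_left a b s t ht.2, gker_left a b u t (le_trans ht.2 hsu)]
  have e2 : ∫ t in s..u, gker a b s t * gker a b u t
      = ∫ t in s..u, (gA a b s + gB a b s * t) * ((u + gA a b u) + (gB a b u - 1)*t) := by
    apply integral_congr
    intro t ht
    rw [Set.uIcc_of_le hsu] at ht
    show gker a b s t * gker a b u t = _
    rw [gker_right a b s t ht.1, gker_left a b u t ht.2]
  have e3 : ∫ t in u..b, gker a b s t * gker a b u t
      = ∫ t in u..b, (gA a b s + gB a b s * t) * (gA a b u + gB a b u * t) := by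
    apply integral_congr
    intro t ht
    rw [Set.uIcc_of_le hub] at ht
    show gker a b s t * gker a b u t = _
    rw [gker_right a b s t (le_trans hsu ht.1), gker_right a b u t ht.1]
  rw [e1, e2, e3, int_mul2, int_mul2, int_mul2]
  unfold gA gB Fker
  have hba : b - a ≠ 0 := by linarith
  field_simp
  ring

lemma Fker_nonneg (a b s u : ℝ) (hab : a < b) (has : a ≤ s) (hsu : s ≤ u) (hub : u ≤ b) :
    0 ≤ Fker a b s u := by
  unfold Fker
  have hba : (0:ℝ) < b - a := by linarith
  apply div_nonneg _ (by nlinarith [pow_pos hba 3])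
  have h1 : 0 ≤ (s-a)^2 := sq_nonneg _
  have h2 : 0 ≤ (b-u)^2 := sq_nonneg _
  have h3 : 0 ≤ 3*(u-a)*(b-a) - (s-a)*(b-a) - 2*(s-a)*(u-a) := by nlinarith
  exact mul_nonneg (mul_nonneg h1 h2) h3

lemma Kker_nonneg (a b s u : ℝ) (hab : a < b) (hs : s ∈ Set.Icc a b) (hu : u ∈ Set.Icc a b) :
    0 ≤ Kker a b s u := by
  unfold Kker
  split_ifs with h
  · exact Fker_nonneg a b s u hab hs.1 h hu.2
  · exact Fker_nonneg a b u s hab hu.1 (le_of_not_ge h) hs.2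

lemma Fker_cont (a b : ℝ) : Continuous (fun p : ℝ × ℝ => Fker a b p.1 p.2) := by
  unfold Fker; fun_prop

lemma Kker_meas (a b : ℝ) : Measurable (fun p : ℝ × ℝ => Kker a b p.1 p.2) := by
  have h2 : Continuous (fun p : ℝ × ℝ => Fker a b p.2 p.1) := by unfold Fker; fun_prop
  unfold Kker
  exact Measurable.ite (measurableSet_le measurable_fst measurable_snd)
    (Fker_cont a b).measurable h2.measurable

lemma Kker_meas_right (a b s : ℝ) : Measurable (fun u : ℝ => Kker a b s u) :=
  (Kker_meas a b).comp (measurable_const.prodMk measurable_id)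

lemma Kker_symm (a b s u : ℝ) : Kker a b s u = Kker a b u s := by
  unfold Kker
  rcases le_or_gt s u with h | h
  · rcases eq_or_lt_of_le h with rfl | h'
    · simp
    · rw [if_pos h, if_neg (not_le.2 h')]
  · rw [if_neg (not_le.2 h), if_pos h.le]

/-- Inner integral of the kernel: the unit-load beam deflection. -/
lemma Kker_integral (a b s : ℝ) (hab : a < b) (has : a ≤ s) (hsb : s ≤ b) :
    ∫ u in a..b, Kker a b s u = (s-a)^2*(b-s)^2/24 := by
  have hba : b - a ≠ 0 := by linarith
  have hcont : ∀ x y : ℝ, IntervalIntegrable (fun u => Kker a b s u) volume x y := by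
    intro x y
    apply IntervalIntegrable.mono_fun' (g := fun u => |Fker a b s u| + |Fker a b u s|)
    · apply Continuous.intervalIntegrable
      have := Fker_cont a b
      fun_prop
    · exact (Kker_meas_right a b s).aestronglyMeasurable
    · apply Filter.Eventually.of_forall
      intro u
      show ‖Kker a b s u‖ ≤ |Fker a b s u| + |Fker a b u s|
      rw [Real.norm_eq_abs]
      unfold Kker
      split_ifs with h
      · exact le_add_of_le_of_nonneg le_rfl (abs_nonneg _)
      · exact le_add_of_nonneg_of_le (abs_nonneg _) le_rfl
  rw [← integral_add_adjacent_intervals (b := s) (hcont a s) (hcont s b)]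
  have e1 : ∫ u in a..s, Kker a b s u = ∫ u in a..s,
      ((-a) + 1*u) * ((-a) + 1*u) *
        (((b-s)^2*(3*(s-a)*(b-a)+a*(b-a)+2*a*(s-a))/(6*(b-a)^3))
          + ((b-s)^2*(-(b-a)-2*(s-a))/(6*(b-a)^3))*u) := by
    apply integral_congr
    intro u hu
    rw [Set.uIcc_of_le has] at hu
    show Kker a b s u = _
    unfold Kker
    rcases eq_or_lt_of_le hu.2 with rfl | h'
    · rw [if_pos le_rfl]; unfold Fker; field_simp; ring
    · rw [if_neg (not_le.2 h')]; unfold Fker; field_simp; ring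
  have e2 : ∫ u in s..b, Kker a b s u = ∫ u in s..b,
      (b + (-1)*u) * (b + (-1)*u) *
        (((s-a)^2*(-3*a*(b-a)-(s-a)*(b-a)+2*a*(s-a))/(6*(b-a)^3))
          + ((s-a)^2*(3*(b-a)-2*(s-a))/(6*(b-a)^3))*u) := by
    apply integral_congr
    intro u hu
    rw [Set.uIcc_of_le hsb] at hu
    show Kker a b s u = _
    unfold Kker
    rw [if_pos hu.1]
    unfold Fker; field_simp; ring
  rw [e1, e2, int_mul3, int_mul3]
  field_simp
  ring

lemma beam_integral (a b : ℝ) (hab : a < b) :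
    ∫ s in a..b, (s-a)^2*(b-s)^2/24 = (b-a)^5/720 := by
  rw [ipoly5 a b (a^2*b^2/24) (-2*a*b*(a+b)/24) (((a+b)^2+2*a*b)/24) (-2*(a+b)/24) (1/24) 0 _
    (fun t => by ring)]
  ring

lemma setIoo_eq (x y : ℝ) (h : x ≤ y) (f : ℝ → ℝ) :
    ∫ t in Set.Ioo x y, f t = ∫ t in x..y, f t := by
  rw [intervalIntegral.integral_of_le h, integral_Ioc_eq_integral_Ioo]

section interval

variable (a b : ℝ) (v : ℝ → ℝ)

/-- Representation of a clamped function via its second derivative. -/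
lemma rep_v (hv : ContDiff ℝ ((⊤:ℕ∞) : WithTop ℕ∞) v) (hva : v a = 0) (hv'a : deriv v a = 0) (s : ℝ) :
    v s = s * (∫ t in a..s, deriv (deriv v) t) - ∫ t in a..s, t * deriv (deriv v) t := by
  have hdv : Differentiable ℝ v := hv.differentiable (by norm_num)
  have hdv' : Differentiable ℝ (deriv v) := (hv.iterate_deriv 1).differentiable (by norm_num)
  have hcv'' : Continuous (deriv (deriv v)) := ((hv.iterate_deriv 2).continuous)
  set H : ℝ → ℝ := fun s => v s - (s * (∫ t in a..s, deriv (deriv v) t)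
    - ∫ t in a..s, t * deriv (deriv v) t) with hH
  have hI : ∀ s, HasDerivAt (fun u => ∫ t in a..u, deriv (deriv v) t) (deriv (deriv v) s) s :=
    fun s => (hcv''.integral_hasStrictDerivAt a s).hasDerivAt
  have hJ : ∀ s, HasDerivAt (fun u => ∫ t in a..u, t * deriv (deriv v) t)
      (s * deriv (deriv v) s) s :=
    fun s => ((continuous_id.mul hcv'').integral_hasStrictDerivAt a s).hasDerivAt
  have hv'eq : ∀ s, (∫ t in a..s, deriv (deriv v) t) = deriv v s := by
    intro s
    rw [intervalIntegral.integral_deriv_eq_sub (fun x _ => hdv'.differentiableAt)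
      (hcv''.continuousOn.intervalIntegrable), hv'a, sub_zero]
  have hHd : ∀ s, HasDerivAt H 0 s := by
    intro s
    have h1 : HasDerivAt (fun u : ℝ => u * (∫ t in a..u, deriv (deriv v) t))
        (1 * (∫ t in a..s, deriv (deriv v) t) + s * deriv (deriv v) s) s :=
      (hasDerivAt_id s).mul (hI s)
    have h2 : HasDerivAt H (deriv v s - (1 * (∫ t in a..s, deriv (deriv v) t)
        + s * deriv (deriv v) s - s * deriv (deriv v) s)) s :=
      (hdv.differentiableAt.hasDerivAt).sub (h1.sub (hJ s))
    have : deriv v s - (1 * (∫ t in a..s, deriv (deriv v) t)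
        + s * deriv (deriv v) s - s * deriv (deriv v) s) = 0 := by
      rw [hv'eq s]; ring
    rwa [this] at h2
  have hconst : H s = H a := by
    apply is_const_of_deriv_eq_zero (fun x => (hHd x).differentiableAt)
    intro x; exact (hHd x).deriv
  have hHa : H a = 0 := by
    simp [hH, hva]
  have := hconst.trans hHa
  simp only [hH] at this
  linarith

lemma moment0 (hv : ContDiff ℝ ((⊤:ℕ∞) : WithTop ℕ∞) v) (hv'a : deriv v a = 0) (hv'b : deriv v b = 0) :
    ∫ t in a..b, deriv (deriv v) t = 0 := by
  have hdv' : Differentiable ℝ (deriv v) := (hv.iterate_deriv 1).differentiable (by norm_num)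
  have hcv'' : Continuous (deriv (deriv v)) := ((hv.iterate_deriv 2).continuous)
  rw [intervalIntegral.integral_deriv_eq_sub (fun x _ => hdv'.differentiableAt)
    (hcv''.continuousOn.intervalIntegrable), hv'a, hv'b, sub_zero]

lemma moment1 (hv : ContDiff ℝ ((⊤:ℕ∞) : WithTop ℕ∞) v) (hva : v a = 0) (hv'a : deriv v a = 0)
    (hvb : v b = 0) (hv'b : deriv v b = 0) :
    ∫ t in a..b, t * deriv (deriv v) t = 0 := by
  have hdv : Differentiable ℝ v := hv.differentiable (by norm_num)
  have hdv' : Differentiable ℝ (deriv v) := (hv.iterate_deriv 1).differentiable (by norm_num)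
  have hcv'' : Continuous (deriv (deriv v)) := ((hv.iterate_deriv 2).continuous)
  have key : ∀ t, HasDerivAt (fun t => t * deriv v t - v t) (t * deriv (deriv v) t) t := by
    intro t
    have h1 : HasDerivAt (fun t : ℝ => t * deriv v t)
        (1 * deriv v t + t * deriv (deriv v) t) t :=
      (hasDerivAt_id t).mul (hdv'.differentiableAt.hasDerivAt)
    have h2 := h1.sub (hdv.differentiableAt.hasDerivAt)
    have : 1 * deriv v t + t * deriv (deriv v) t - deriv v t = t * deriv (deriv v) t := by ring
    rwa [this] at h2
  rw [intervalIntegral.integral_eq_sub_of_hasDerivAt (fun t _ => key t)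
    ((continuous_id.mul hcv'').continuousOn.intervalIntegrable)]
  rw [hva, hv'a, hvb, hv'b]
  ring

end interval

section main

/-- The per-interval compliance inequality. -/
lemma interval_compliance (a b : ℝ) (hab : a < b) (ρ v : ℝ → ℝ)
    (hρm : Measurable ρ) (hρ : ∀ x, |ρ x| ≤ 1)
    (hv : ContDiff ℝ ((⊤:ℕ∞) : WithTop ℕ∞) v)
    (hva : v a = 0) (hv'a : deriv v a = 0) (hvb : v b = 0) (hv'b : deriv v b = 0) :
    ∫ s in Set.Ioo a b, ρ s * v s
      ≤ (1/2) * (∫ t in Set.Ioo a b, (deriv (deriv v) t)^2) + (b-a)^5/1440 := by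
  have hIoo : MeasurableSet (Set.Ioo a b) := measurableSet_Ioo
  have hIccIoo := Set.Ioo_subset_Icc_self (a := a) (b := b)
  set μ := volume.restrict (Set.Ioo a b) with hμdef
  haveI hfin : IsFiniteMeasure μ := by
    constructor
    rw [hμdef, Measure.restrict_apply_univ]
    exact measure_Ioo_lt_top
  have hcv'' : Continuous (deriv (deriv v)) := ((hv.iterate_deriv 2).continuous)
  have hgm : Measurable fun p : ℝ × ℝ => gker a b p.1 p.2 := (gker_cont2 a b).measurable
  have hg2 : Continuous fun p : ℝ × ℝ => gker a b p.2 p.1 :=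
    (gker_cont2 a b).comp (continuous_snd.prodMk continuous_fst)
  -- bounds
  obtain ⟨Cg0, hCg0⟩ := (isCompact_Icc.prod isCompact_Icc).exists_bound_of_continuousOn
    (gker_cont2 a b).continuousOn
  set Cg := max Cg0 0 with hCgdef
  have hCg : ∀ s ∈ Set.Icc a b, ∀ t ∈ Set.Icc a b, |gker a b s t| ≤ Cg := by
    intro s hs t ht
    calc |gker a b s t| ≤ Cg0 := by
          have := hCg0 (s, t) (Set.mk_mem_prod hs ht)
          simpa [Real.norm_eq_abs] using this
      _ ≤ Cg := le_max_left _ _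
  have hCgnn : 0 ≤ Cg := le_max_right _ _
  obtain ⟨Cv0, hCv0⟩ := isCompact_Icc.exists_bound_of_continuousOn
    (hcv''.continuousOn (s := Set.Icc a b))
  set Cv := max Cv0 0 with hCvdef
  have hCv : ∀ t ∈ Set.Icc a b, |deriv (deriv v) t| ≤ Cv := by
    intro t ht
    calc |deriv (deriv v) t| ≤ Cv0 := by simpa [Real.norm_eq_abs] using hCv0 t ht
      _ ≤ Cv := le_max_left _ _
  have hCvnn : 0 ≤ Cv := le_max_right _ _
  obtain ⟨CF0, hCF0⟩ := (isCompact_Icc.prod isCompact_Icc).exists_bound_of_continuousOn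
    (Fker_cont a b).continuousOn
  set CK := max CF0 0 with hCKdef
  have hCK : ∀ s ∈ Set.Icc a b, ∀ u ∈ Set.Icc a b, |Kker a b s u| ≤ CK := by
    intro s hs u hu
    have h1 : |Fker a b s u| ≤ CK :=
      le_trans (by simpa [Real.norm_eq_abs] using hCF0 (s, u) (Set.mk_mem_prod hs hu))
        (le_max_left _ _)
    have h2 : |Fker a b u s| ≤ CK :=
      le_trans (by simpa [Real.norm_eq_abs] using hCF0 (u, s) (Set.mk_mem_prod hu hs))
        (le_max_left _ _)
    unfold Kker
    split_ifs <;> assumption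
  -- Φ
  set Φ : ℝ → ℝ := fun t => ∫ s, ρ s * gker a b s t ∂μ with hΦdef
  have hΦm : Measurable Φ := by
    have : StronglyMeasurable fun p : ℝ × ℝ => ρ p.2 * gker a b p.2 p.1 :=
      ((hρm.comp measurable_snd).mul hg2.measurable).stronglyMeasurable
    exact (this.integral_prod_right' (ν := μ)).measurable
  set CΦ := Cg * (μ Set.univ).toReal with hCΦdef
  have hCΦnn : 0 ≤ CΦ := mul_nonneg hCgnn ENNReal.toReal_nonneg
  have hΦbd : ∀ t ∈ Set.Icc a b, |Φ t| ≤ CΦ := by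
    intro t ht
    have : ∀ᵐ s ∂μ, ‖ρ s * gker a b s t‖ ≤ Cg := by
      refine (ae_restrict_mem hIoo).mono fun s hs => ?_
      rw [Real.norm_eq_abs, abs_mul]
      calc |ρ s| * |gker a b s t| ≤ 1 * Cg :=
            mul_le_mul (hρ s) (hCg s (hIccIoo hs) t ht) (abs_nonneg _) zero_le_one
        _ = Cg := one_mul Cg
    have h2 := norm_integral_le_of_norm_le_const (μ := μ) this
    show |∫ (s : ℝ), ρ s * gker a b s t ∂μ| ≤ Cg * (μ Set.univ).toReal
    simpa [Real.norm_eq_abs, mul_comm, Measure.real] using h2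
  -- the kernel as an integral
  have hKint : ∀ s ∈ Set.Icc a b, ∀ u ∈ Set.Icc a b,
      (∫ t, gker a b s t * gker a b u t ∂μ) = Kker a b s u := by
    intro s hs u hu
    rcases le_or_gt s u with h | h
    · rw [hμdef]
      show (∫ t in Set.Ioo a b, gker a b s t * gker a b u t) = _
      rw [setIoo_eq a b hab.le, kernel_eq a b s u hab hs.1 h hu.2]
      unfold Kker
      rw [if_pos h]
    · have hcomm : (fun t => gker a b s t * gker a b u t)
          = fun t => gker a b u t * gker a b s t := by
        funext t; ring
      rw [hμdef]
      show (∫ t in Set.Ioo a b, gker a b s t * gker a b u t) = _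
      rw [hcomm, setIoo_eq a b hab.le, kernel_eq a b u s hab hu.1 h.le hs.2]
      unfold Kker
      rw [if_neg (not_le.2 h)]
  -- Step A : ∫ ρ v = ∫ Φ v''
  have hrep : ∀ s ∈ Set.Ioo a b, ρ s * v s = ρ s * ∫ t, gker a b s t * deriv (deriv v) t ∂μ := by
    intro s hs
    congr 1
    rw [hμdef]
    show v s = ∫ t in Set.Ioo a b, gker a b s t * deriv (deriv v) t
    rw [setIoo_eq a b hab.le]
    have hint : ∀ x y : ℝ, IntervalIntegrable
        (fun t => max (s-t) 0 * deriv (deriv v) t) volume x y :=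
      fun x y => (((continuous_const.sub continuous_id).max continuous_const).mul
        hcv'').intervalIntegrable x y
    have hint2 : ∀ x y : ℝ, IntervalIntegrable
        (fun t => (gA a b s + gB a b s * t) * deriv (deriv v) t) volume x y :=
      fun x y => ((continuous_const.add (continuous_const.mul continuous_id)).mul
        hcv'').intervalIntegrable x y
    have hsplit : (fun t => gker a b s t * deriv (deriv v) t)
        = fun t => max (s-t) 0 * deriv (deriv v) t
            + (gA a b s + gB a b s * t) * deriv (deriv v) t := by
      funext t; unfold gker; ring
    rw [hsplit, intervalIntegral.integral_add (hint a b) (hint2 a b)]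
    have haff : ∫ t in a..b, (gA a b s + gB a b s * t) * deriv (deriv v) t = 0 := by
      have hsplit2 : (fun t => (gA a b s + gB a b s * t) * deriv (deriv v) t)
          = fun t => gA a b s * deriv (deriv v) t + gB a b s * (t * deriv (deriv v) t) := by
        funext t; ring
      have hi1 : IntervalIntegrable (fun t => gA a b s * deriv (deriv v) t) volume a b :=
        (continuous_const.mul hcv'').intervalIntegrable a b
      have hi2 : IntervalIntegrable (fun t => gB a b s * (t * deriv (deriv v) t)) volume a b :=
        (continuous_const.mul (continuous_id.mul hcv'')).intervalIntegrable a b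
      rw [hsplit2, intervalIntegral.integral_add hi1 hi2,
        intervalIntegral.integral_const_mul, intervalIntegral.integral_const_mul,
        moment0 a b v hv hv'a hv'b, moment1 a b v hv hva hv'a hvb hv'b]
      ring
    have hmax : ∫ t in a..b, max (s-t) 0 * deriv (deriv v) t = v s := by
      have hsle : s ≤ b := hs.2.le
      have hale : a ≤ s := hs.1.le
      rw [← intervalIntegral.integral_add_adjacent_intervals (b := s) (hint a s) (hint s b)]
      have hz : ∫ t in s..b, max (s-t) 0 * deriv (deriv v) t = 0 := by
        rw [intervalIntegral.integral_congr (g := fun _ => (0:ℝ))]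
        · simp
        · intro t ht
          rw [Set.uIcc_of_le hsle] at ht
          show max (s-t) 0 * deriv (deriv v) t = 0
          rw [max_eq_right (by linarith [ht.1])]
          ring
      have hmain : ∫ t in a..s, max (s-t) 0 * deriv (deriv v) t = v s := by
        rw [intervalIntegral.integral_congr
          (g := fun t => s * deriv (deriv v) t - t * deriv (deriv v) t)]
        · have hi3 : IntervalIntegrable (fun t => s * deriv (deriv v) t) volume a s :=
            (continuous_const.mul hcv'').intervalIntegrable a s
          have hi4 : IntervalIntegrable (fun t => t * deriv (deriv v) t) volume a s :=
            (continuous_id.mul hcv'').intervalIntegrable a s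
          rw [intervalIntegral.integral_sub hi3 hi4,
            intervalIntegral.integral_const_mul, ← rep_v a v hv hva hv'a s]
        · intro t ht
          rw [Set.uIcc_of_le hale] at ht
          show max (s-t) 0 * deriv (deriv v) t = _
          rw [max_eq_left (by linarith [ht.2])]
          ring
      rw [hz, hmain, add_zero]
    rw [haff, hmax, add_zero]
  have hswap1 : Integrable (Function.uncurry
      fun s t => ρ s * (gker a b s t * deriv (deriv v) t)) (μ.prod μ) := by
    apply Integrable.mono' (g := fun _ => Cg * Cv) (integrable_const _)
    · exact ((hρm.comp measurable_fst).mul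
        (hgm.mul (hcv''.measurable.comp measurable_snd))).aestronglyMeasurable
    · rw [hμdef, Measure.prod_restrict]
      refine (ae_restrict_mem (hIoo.prod hIoo)).mono fun p hp => ?_
      rcases hp with ⟨hp1, hp2⟩
      rw [Function.uncurry]
      rw [Real.norm_eq_abs, abs_mul, abs_mul]
      calc |ρ p.1| * (|gker a b p.1 p.2| * |deriv (deriv v) p.2|)
          ≤ 1 * (Cg * Cv) := by
            apply mul_le_mul (hρ p.1) _ (by positivity) zero_le_one
            exact mul_le_mul (hCg p.1 (hIccIoo hp1) p.2 (hIccIoo hp2))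
              (hCv p.2 (hIccIoo hp2)) (abs_nonneg _) hCgnn
        _ = Cg * Cv := one_mul _
  have hA : (∫ s, ρ s * v s ∂μ) = ∫ t, Φ t * deriv (deriv v) t ∂μ := by
    rw [hμdef]
    show (∫ s in Set.Ioo a b, ρ s * v s) = _
    rw [setIntegral_congr_fun hIoo hrep]
    show (∫ s, ρ s * ∫ t, gker a b s t * deriv (deriv v) t ∂μ ∂μ) = _
    have e1 : (fun s => ρ s * ∫ t, gker a b s t * deriv (deriv v) t ∂μ)
        = fun s => ∫ t, ρ s * (gker a b s t * deriv (deriv v) t) ∂μ := by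
      funext s
      rw [MeasureTheory.integral_const_mul]
    rw [e1, integral_integral_swap hswap1]
    congr 1
    funext t
    have e2 : (fun s => ρ s * (gker a b s t * deriv (deriv v) t))
        = fun s => (ρ s * gker a b s t) * deriv (deriv v) t := by
      funext s; ring
    rw [e2, MeasureTheory.integral_mul_const]
  -- Step B : Young's inequality
  have hintΦv : Integrable (fun t => Φ t * deriv (deriv v) t) μ := by
    apply Integrable.mono' (g := fun _ => CΦ * Cv) (integrable_const _)
    · exact (hΦm.mul hcv''.measurable).aestronglyMeasurable
    · refine (ae_restrict_mem hIoo).mono fun t ht => ?_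
      rw [Real.norm_eq_abs, abs_mul]
      exact mul_le_mul (hΦbd t (hIccIoo ht)) (hCv t (hIccIoo ht)) (abs_nonneg _) hCΦnn
  have hintv2 : Integrable (fun t => (deriv (deriv v) t)^2) μ := by
    apply Integrable.mono' (g := fun _ => Cv^2) (integrable_const _)
    · exact (hcv''.measurable.pow_const 2).aestronglyMeasurable
    · refine (ae_restrict_mem hIoo).mono fun t ht => ?_
      rw [Real.norm_eq_abs, abs_pow]
      have h := hCv t (hIccIoo ht)
      nlinarith [abs_nonneg (deriv (deriv v) t)]
  have hintΦ2 : Integrable (fun t => (Φ t)^2) μ := by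
    apply Integrable.mono' (g := fun _ => CΦ^2) (integrable_const _)
    · exact (hΦm.pow_const 2).aestronglyMeasurable
    · refine (ae_restrict_mem hIoo).mono fun t ht => ?_
      rw [Real.norm_eq_abs, abs_pow]
      have h := hΦbd t (hIccIoo ht)
      nlinarith [abs_nonneg (Φ t)]
  have hB : ∫ t, Φ t * deriv (deriv v) t ∂μ
      ≤ (1/2) * (∫ t, (deriv (deriv v) t)^2 ∂μ) + (1/2) * ∫ t, (Φ t)^2 ∂μ := by
    have hmono : ∫ t, Φ t * deriv (deriv v) t ∂μ
        ≤ ∫ t, ((1/2) * (deriv (deriv v) t)^2 + (1/2) * (Φ t)^2) ∂μ := by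
      apply integral_mono hintΦv ((hintv2.const_mul _).add (hintΦ2.const_mul _))
      intro t
      show Φ t * deriv (deriv v) t ≤ (1/2) * (deriv (deriv v) t)^2 + (1/2) * (Φ t)^2
      nlinarith [sq_nonneg (Φ t - deriv (deriv v) t)]
    rwa [integral_add (hintv2.const_mul _) (hintΦ2.const_mul _),
      MeasureTheory.integral_const_mul, MeasureTheory.integral_const_mul] at hmono
  -- Step C : kernel bound
  set ψ : ℝ → ℝ := fun s => ∫ u, ρ u * Kker a b s u ∂μ with hψdef
  have hψm : Measurable ψ := by
    have : StronglyMeasurable fun p : ℝ × ℝ => ρ p.2 * Kker a b p.1 p.2 :=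
      ((hρm.comp measurable_snd).mul (Kker_meas a b)).stronglyMeasurable
    exact (this.integral_prod_right' (ν := μ)).measurable
  have hswap2 : Integrable (Function.uncurry
      fun t s => (ρ s * gker a b s t) * Φ t) (μ.prod μ) := by
    apply Integrable.mono' (g := fun _ => Cg * CΦ) (integrable_const _)
    · exact (((hρm.comp measurable_snd).mul hg2.measurable).mul
        (hΦm.comp measurable_fst)).aestronglyMeasurable
    · rw [hμdef, Measure.prod_restrict]
      refine (ae_restrict_mem (hIoo.prod hIoo)).mono fun p hp => ?_
      rcases hp with ⟨hp1, hp2⟩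
      rw [Function.uncurry]
      rw [Real.norm_eq_abs, abs_mul, abs_mul]
      calc |ρ p.2| * |gker a b p.2 p.1| * |Φ p.1|
          ≤ 1 * Cg * CΦ := by
            apply mul_le_mul _ (hΦbd p.1 (hIccIoo hp1)) (abs_nonneg _)
              (by positivity)
            exact mul_le_mul (hρ p.2) (hCg p.2 (hIccIoo hp2) p.1 (hIccIoo hp1))
              (abs_nonneg _) zero_le_one
        _ = Cg * CΦ := by ring
  have inner2 : ∀ s ∈ Set.Ioo a b, (∫ t, gker a b s t * Φ t ∂μ) = ψ s := by
    intro s hs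
    have hsI := hIccIoo hs
    have hgsc : Continuous fun p : ℝ × ℝ => gker a b s p.1 :=
      (gker_cont a b s).comp continuous_fst
    have hswap3 : Integrable (Function.uncurry
        fun t u => gker a b s t * (ρ u * gker a b u t)) (μ.prod μ) := by
      apply Integrable.mono' (g := fun _ => Cg * Cg) (integrable_const _)
      · exact (hgsc.measurable.mul
          ((hρm.comp measurable_snd).mul hg2.measurable)).aestronglyMeasurable
      · rw [hμdef, Measure.prod_restrict]
        refine (ae_restrict_mem (hIoo.prod hIoo)).mono fun p hp => ?_
        rcases hp with ⟨hp1, hp2⟩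
        rw [Function.uncurry]
        rw [Real.norm_eq_abs, abs_mul, abs_mul]
        calc |gker a b s p.1| * (|ρ p.2| * |gker a b p.2 p.1|)
            ≤ Cg * (1 * Cg) := by
              apply mul_le_mul (hCg s hsI p.1 (hIccIoo hp1)) _ (by positivity) hCgnn
              exact mul_le_mul (hρ p.2) (hCg p.2 (hIccIoo hp2) p.1 (hIccIoo hp1))
                (abs_nonneg _) zero_le_one
          _ = Cg * Cg := by ring
    calc ∫ t, gker a b s t * Φ t ∂μ
        = ∫ t, ∫ u, gker a b s t * (ρ u * gker a b u t) ∂μ ∂μ := by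
          congr 1; funext t
          exact (MeasureTheory.integral_const_mul _ _).symm
      _ = ∫ u, ∫ t, gker a b s t * (ρ u * gker a b u t) ∂μ ∂μ :=
          integral_integral_swap hswap3
      _ = ψ s := by
          apply setIntegral_congr_fun hIoo
          intro u hu
          show (∫ t, gker a b s t * (ρ u * gker a b u t) ∂μ) = ρ u * Kker a b s u
          rw [← hKint s hsI u (hIccIoo hu), ← MeasureTheory.integral_const_mul]
          congr 1; funext t; ring
  have hC1 : (∫ t, (Φ t)^2 ∂μ) = ∫ s, ρ s * ψ s ∂μ := by
    calc ∫ t, (Φ t)^2 ∂μ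
        = ∫ t, (∫ s, (ρ s * gker a b s t) * Φ t ∂μ) ∂μ := by
          congr 1; funext t
          rw [MeasureTheory.integral_mul_const, sq]
      _ = ∫ s, (∫ t, (ρ s * gker a b s t) * Φ t ∂μ) ∂μ :=
          integral_integral_swap hswap2
      _ = ∫ s, ρ s * (∫ t, gker a b s t * Φ t ∂μ) ∂μ := by
          congr 1; funext s
          rw [← MeasureTheory.integral_const_mul]
          congr 1; funext t; ring
      _ = ∫ s, ρ s * ψ s ∂μ := by
          apply setIntegral_congr_fun hIoo
          intro s hs
          show ρ s * (∫ t, gker a b s t * Φ t ∂μ) = ρ s * ψ s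
          rw [inner2 s hs]
  have hintK : ∀ s ∈ Set.Icc a b, Integrable (fun u => Kker a b s u) μ := by
    intro s hsI
    apply Integrable.mono' (g := fun _ => CK) (integrable_const _)
    · exact (Kker_meas_right a b s).aestronglyMeasurable
    · refine (ae_restrict_mem hIoo).mono fun u hu => ?_
      rw [Real.norm_eq_abs]
      exact hCK s hsI u (hIccIoo hu)
  have hintρK : ∀ s ∈ Set.Icc a b, Integrable (fun u => ρ u * Kker a b s u) μ := by
    intro s hsI
    apply Integrable.mono' (g := fun _ => 1 * CK) (integrable_const _)
    · exact (hρm.mul (Kker_meas_right a b s)).aestronglyMeasurable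
    · refine (ae_restrict_mem hIoo).mono fun u hu => ?_
      rw [Real.norm_eq_abs, abs_mul]
      exact mul_le_mul (hρ u) (hCK s hsI u (hIccIoo hu)) (abs_nonneg _) zero_le_one
  have hψbd : ∀ s ∈ Set.Ioo a b, ρ s * ψ s ≤ (s-a)^2*(b-s)^2/24 := by
    intro s hs
    have hsI := hIccIoo hs
    have hKbeam : (∫ u, Kker a b s u ∂μ) = (s-a)^2*(b-s)^2/24 := by
      rw [hμdef]
      show (∫ u in Set.Ioo a b, Kker a b s u) = _
      rw [setIoo_eq a b hab.le, Kker_integral a b s hab hsI.1 hsI.2]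
    have h1 : |ψ s| ≤ ∫ u, Kker a b s u ∂μ := by
      have ha : |ψ s| ≤ ∫ u, |ρ u| * |Kker a b s u| ∂μ := by
        simpa [Real.norm_eq_abs, abs_mul] using
          norm_integral_le_integral_norm (μ := μ) (fun u => ρ u * Kker a b s u)
      have hintabs : Integrable (fun u => |ρ u| * |Kker a b s u|) μ := by
        apply Integrable.mono' (g := fun _ => 1 * CK) (integrable_const _)
        · exact (hρm.abs.mul (Kker_meas_right a b s).abs).aestronglyMeasurable
        · refine (ae_restrict_mem hIoo).mono fun u hu => ?_
          rw [Real.norm_eq_abs, abs_of_nonneg (by positivity)]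
          exact mul_le_mul (hρ u) (hCK s hsI u (hIccIoo hu)) (abs_nonneg _) zero_le_one
      refine le_trans ha (integral_mono_ae hintabs (hintK s hsI) ?_)
      refine (ae_restrict_mem hIoo).mono fun u hu => ?_
      show |ρ u| * |Kker a b s u| ≤ Kker a b s u
      have hKnn : 0 ≤ Kker a b s u := Kker_nonneg a b s u hab hsI (hIccIoo hu)
      rw [abs_of_nonneg hKnn]
      calc |ρ u| * Kker a b s u ≤ 1 * Kker a b s u :=
            mul_le_mul_of_nonneg_right (hρ u) hKnn
        _ = Kker a b s u := one_mul _
    calc ρ s * ψ s ≤ |ρ s * ψ s| := le_abs_self _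
      _ ≤ |ψ s| := by
          rw [abs_mul]
          calc |ρ s| * |ψ s| ≤ 1 * |ψ s| :=
                mul_le_mul_of_nonneg_right (hρ s) (abs_nonneg _)
            _ = |ψ s| := one_mul _
      _ ≤ ∫ u, Kker a b s u ∂μ := h1
      _ = (s-a)^2*(b-s)^2/24 := hKbeam
  have hbeamint : IntegrableOn (fun s => (s-a)^2*(b-s)^2/24) (Set.Ioo a b) volume := by
    apply IntegrableOn.mono_set (t := Set.Icc a b) _ Set.Ioo_subset_Icc_self
    apply ContinuousOn.integrableOn_compact isCompact_Icc
    apply Continuous.continuousOn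
    fun_prop
  have hρψint : IntegrableOn (fun s => ρ s * ψ s) (Set.Ioo a b) volume := by
    apply Integrable.mono' (g := fun _ => 1 * (CK * (μ Set.univ).toReal)) (integrable_const _)
    · exact (hρm.mul hψm).aestronglyMeasurable
    · refine (ae_restrict_mem hIoo).mono fun s hs => ?_
      have hsI := hIccIoo hs
      rw [Real.norm_eq_abs, abs_mul]
      apply mul_le_mul (hρ s) _ (abs_nonneg _) zero_le_one
      have : ∀ᵐ u ∂μ, ‖ρ u * Kker a b s u‖ ≤ CK := by
        refine (ae_restrict_mem hIoo).mono fun u hu => ?_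
        rw [Real.norm_eq_abs, abs_mul]
        calc |ρ u| * |Kker a b s u| ≤ 1 * CK :=
              mul_le_mul (hρ u) (hCK s hsI u (hIccIoo hu)) (abs_nonneg _) zero_le_one
          _ = CK := one_mul _
      have h2 := norm_integral_le_of_norm_le_const (μ := μ) this
      show |∫ (u : ℝ), ρ u * Kker a b s u ∂μ| ≤ CK * (μ Set.univ).toReal
      simpa [Real.norm_eq_abs, mul_comm, Measure.real] using h2
  have hC2 : (∫ s, ρ s * ψ s ∂μ) ≤ ∫ s, (s-a)^2*(b-s)^2/24 ∂μ := by
    rw [hμdef]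
    exact setIntegral_mono_on hρψint hbeamint hIoo hψbd
  have hC3 : (∫ s, (s-a)^2*(b-s)^2/24 ∂μ) = (b-a)^5/720 := by
    rw [hμdef]
    show (∫ s in Set.Ioo a b, (s-a)^2*(b-s)^2/24) = _
    rw [setIoo_eq a b hab.le, beam_integral a b hab]
  have hC : (∫ t, (Φ t)^2 ∂μ) ≤ (b-a)^5/720 := by
    rw [hC1]
    calc (∫ s, ρ s * ψ s ∂μ) ≤ ∫ s, (s-a)^2*(b-s)^2/24 ∂μ := hC2
      _ = (b-a)^5/720 := hC3
  calc ∫ s in Set.Ioo a b, ρ s * v s = ∫ t, Φ t * deriv (deriv v) t ∂μ := hA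
    _ ≤ (1/2) * (∫ t, (deriv (deriv v) t)^2 ∂μ) + (1/2) * ∫ t, (Φ t)^2 ∂μ := hB
    _ ≤ (1/2) * (∫ t, (deriv (deriv v) t)^2 ∂μ) + (1/2) * ((b-a)^5/720) := by linarith
    _ = (1/2) * (∫ t in Set.Ioo a b, (deriv (deriv v) t)^2) + (b-a)^5/1440 := by
        rw [hμdef]; ring

end main

/-- Canonical connected-component endpoints of an open set of finite measure. -/
lemma components (Ω : Set ℝ) (hΩ : IsOpen Ω) (hvol : volume Ω ≠ ⊤) :
    ∃ A B : ℝ → ℝ, ∀ x ∈ Ω, A x < x ∧ x < B x ∧ Set.Ioo (A x) (B x) ⊆ Ω ∧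
      A x ∉ Ω ∧ B x ∉ Ω ∧ ∀ z ∈ Set.Ioo (A x) (B x), A z = A x ∧ B z = B x := by
  have hclosed : IsClosed Ωᶜ := hΩ.isClosed_compl
  have hne1 : ∀ x : ℝ, (Ωᶜ ∩ Set.Iic x).Nonempty := by
    intro x
    by_contra h
    rw [Set.not_nonempty_iff_eq_empty] at h
    have hsub : Set.Iic x ⊆ Ω := fun y hy => by
      by_contra hyΩ
      exact Set.eq_empty_iff_forall_notMem.mp h y ⟨hyΩ, hy⟩
    exact hvol (top_le_iff.mp ((Real.volume_Iic (a := x)) ▸ measure_mono hsub))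
  have hne2 : ∀ x : ℝ, (Ωᶜ ∩ Set.Ici x).Nonempty := by
    intro x
    by_contra h
    rw [Set.not_nonempty_iff_eq_empty] at h
    have hsub : Set.Ici x ⊆ Ω := fun y hy => by
      by_contra hyΩ
      exact Set.eq_empty_iff_forall_notMem.mp h y ⟨hyΩ, hy⟩
    exact hvol (top_le_iff.mp ((Real.volume_Ici (a := x)) ▸ measure_mono hsub))
  have hbdd1 : ∀ x : ℝ, BddAbove (Ωᶜ ∩ Set.Iic x) := fun x => ⟨x, fun y hy => hy.2⟩
  have hbdd2 : ∀ x : ℝ, BddBelow (Ωᶜ ∩ Set.Ici x) := fun x => ⟨x, fun y hy => hy.2⟩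
  have hmemA : ∀ x : ℝ, sSup (Ωᶜ ∩ Set.Iic x) ∈ Ωᶜ ∩ Set.Iic x := fun x =>
    (hclosed.inter isClosed_Iic).csSup_mem (hne1 x) (hbdd1 x)
  have hmemB : ∀ x : ℝ, sInf (Ωᶜ ∩ Set.Ici x) ∈ Ωᶜ ∩ Set.Ici x := fun x =>
    (hclosed.inter isClosed_Ici).csInf_mem (hne2 x) (hbdd2 x)
  refine ⟨fun x => sSup (Ωᶜ ∩ Set.Iic x), fun x => sInf (Ωᶜ ∩ Set.Ici x), ?_⟩
  -- key sub-lemma, for an arbitrary point of Ω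
  have main : ∀ x ∈ Ω, sSup (Ωᶜ ∩ Set.Iic x) < x ∧ x < sInf (Ωᶜ ∩ Set.Ici x) ∧
      Set.Ioo (sSup (Ωᶜ ∩ Set.Iic x)) (sInf (Ωᶜ ∩ Set.Ici x)) ⊆ Ω ∧
      sSup (Ωᶜ ∩ Set.Iic x) ∉ Ω ∧ sInf (Ωᶜ ∩ Set.Ici x) ∉ Ω := by
    intro x hx
    have hA1 : sSup (Ωᶜ ∩ Set.Iic x) ∉ Ω := (hmemA x).1
    have hB1 : sInf (Ωᶜ ∩ Set.Ici x) ∉ Ω := (hmemB x).1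
    have hA2 : sSup (Ωᶜ ∩ Set.Iic x) < x :=
      lt_of_le_of_ne (hmemA x).2 (fun h => hA1 (by rw [h]; exact hx))
    have hB2 : x < sInf (Ωᶜ ∩ Set.Ici x) :=
      lt_of_le_of_ne (hmemB x).2 (fun h => hB1 (by rw [← h]; exact hx))
    refine ⟨hA2, hB2, ?_, hA1, hB1⟩
    intro z hz
    by_contra hzΩ
    rcases le_total z x with h | h
    · exact absurd (le_csSup (hbdd1 x) ⟨hzΩ, h⟩) (not_le.2 hz.1)
    · exact absurd (csInf_le (hbdd2 x) ⟨hzΩ, h⟩) (not_le.2 hz.2)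
  intro x hx
  obtain ⟨hA2, hB2, hsub, hA1, hB1⟩ := main x hx
  refine ⟨hA2, hB2, hsub, hA1, hB1, ?_⟩
  intro z hz
  constructor
  · -- A z = A x
    show sSup (Ωᶜ ∩ Set.Iic z) = sSup (Ωᶜ ∩ Set.Iic x)
    have hseteq : Ωᶜ ∩ Set.Iic z = Ωᶜ ∩ Set.Iic (sSup (Ωᶜ ∩ Set.Iic x)) := by
      ext y
      constructor
      · rintro ⟨hyΩ, hy⟩
        refine ⟨hyΩ, ?_⟩
        by_contra hgt
        simp only [Set.mem_Iic, not_le] at hgt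
        exact hyΩ (hsub ⟨hgt, lt_of_le_of_lt hy hz.2⟩)
      · rintro ⟨hyΩ, hy⟩
        exact ⟨hyΩ, le_trans hy hz.1.le⟩
    rw [hseteq]
    apply le_antisymm
    · exact csSup_le ⟨sSup (Ωᶜ ∩ Set.Iic x), ⟨hA1, Set.mem_Iic.mpr le_rfl⟩⟩ (fun y hy => hy.2)
    · exact le_csSup ⟨sSup (Ωᶜ ∩ Set.Iic x), fun y hy => hy.2⟩ ⟨hA1, Set.mem_Iic.mpr le_rfl⟩
  · -- B z = B x
    show sInf (Ωᶜ ∩ Set.Ici z) = sInf (Ωᶜ ∩ Set.Ici x)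
    have hseteq : Ωᶜ ∩ Set.Ici z = Ωᶜ ∩ Set.Ici (sInf (Ωᶜ ∩ Set.Ici x)) := by
      ext y
      constructor
      · rintro ⟨hyΩ, hy⟩
        refine ⟨hyΩ, ?_⟩
        by_contra hgt
        simp only [Set.mem_Ici, not_le] at hgt
        exact hyΩ (hsub ⟨lt_of_lt_of_le hz.1 hy, hgt⟩)
      · rintro ⟨hyΩ, hy⟩
        exact ⟨hyΩ, le_trans hz.2.le hy⟩
    rw [hseteq]
    apply le_antisymm
    · exact csInf_le ⟨sInf (Ωᶜ ∩ Set.Ici x), fun y hy => hy.2⟩ ⟨hB1, Set.mem_Ici.mpr le_rfl⟩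
    · exact le_csInf ⟨sInf (Ωᶜ ∩ Set.Ici x), ⟨hB1, Set.mem_Ici.mpr le_rfl⟩⟩ (fun y hy => hy.2)

/-- Variable-load compliance bound in one dimension: if `Ω ⊆ ℝ` is open with
measure `2R` and `ρ` is a measurable load with `|ρ| ≤ 1`, then for every smooth
`v` compactly supported in `Ω`, `(1/2)∫(v″)² − ∫ρv ≥ −R⁵/45`. -/
theorem stmt_12 (R : ℝ) (hR : 0 < R)
    (Ω : Set ℝ) (hΩ : IsOpen Ω) (hvol : volume Ω = ENNReal.ofReal (2*R))
    (ρ : ℝ → ℝ) (hρmeas : Measurable ρ) (hρ : ∀ x, |ρ x| ≤ 1)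
    (v : ℝ → ℝ) (hv : ContDiff ℝ (⊤ : ℕ∞) v) (hsupp : HasCompactSupport v)
    (hsub : tsupport v ⊆ Ω) :
    (1/2) * (∫ x, (deriv (deriv v) x)^2) - ∫ x, ρ x * v x ≥ -(R^5 / 45) := by
  classical
  have hvol' : volume Ω ≠ ⊤ := by rw [hvol]; exact ENNReal.ofReal_ne_top
  obtain ⟨A, B, hAB⟩ := components Ω hΩ hvol'
  have hv' : ContDiff ℝ ((⊤:ℕ∞) : WithTop ℕ∞) v := hv.of_le (by simp)
  have hcv'' : Continuous (deriv (deriv v)) := (hv'.iterate_deriv 2).continuous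
  -- basic integrability
  have hρv_int : Integrable (fun x => ρ x * v x) volume := by
    apply Integrable.bdd_mul (hv.continuous.integrable_of_hasCompactSupport hsupp)
      hρmeas.aestronglyMeasurable
    exact Filter.Eventually.of_forall (fun x => by rw [Real.norm_eq_abs]; exact hρ x)
  have hv2_int : Integrable (fun x => (deriv (deriv v) x)^2) volume := by
    apply Continuous.integrable_of_hasCompactSupport (by fun_prop)
    exact HasCompactSupport.comp_left (g := fun y : ℝ => y^2) (hsupp.deriv.deriv) (by simp)
  -- finite cover of the support by component intervals
  set U : ℝ → Set ℝ := fun x => if x ∈ Ω then Set.Ioo (A x) (B x) else ∅ with hUdef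
  have hUopen : ∀ x, IsOpen (U x) := by
    intro x
    show IsOpen (if x ∈ Ω then Set.Ioo (A x) (B x) else ∅)
    split_ifs
    · exact isOpen_Ioo
    · exact isOpen_empty
  have hcover : tsupport v ⊆ ⋃ x, U x := by
    intro y hy
    have hyΩ : y ∈ Ω := hsub hy
    refine Set.mem_iUnion.mpr ⟨y, ?_⟩
    show y ∈ (if y ∈ Ω then Set.Ioo (A y) (B y) else ∅)
    simp only [if_pos hyΩ]
    exact ⟨(hAB y hyΩ).1, (hAB y hyΩ).2.1⟩
  obtain ⟨t, ht⟩ := hsupp.elim_finite_subcover U hUopen hcover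
  set P : Finset (ℝ × ℝ) := (t.filter (fun x => x ∈ Ω)).image (fun x => (A x, B x)) with hPdef
  have hPmem : ∀ p ∈ P, ∃ x ∈ Ω, A x = p.1 ∧ B x = p.2 := by
    intro p hp
    rw [hPdef, Finset.mem_image] at hp
    obtain ⟨x, hx, hxp⟩ := hp
    have hxΩ : x ∈ Ω := (Finset.mem_filter.mp hx).2
    exact ⟨x, hxΩ, by rw [← hxp], by rw [← hxp]⟩
  have hPprop : ∀ p ∈ P, p.1 < p.2 ∧ Set.Ioo p.1 p.2 ⊆ Ω ∧ p.1 ∉ Ω ∧ p.2 ∉ Ω := by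
    intro p hp
    obtain ⟨x, hxΩ, h1, h2⟩ := hPmem p hp
    obtain ⟨ha, hb, hsub', hA1, hB1, _⟩ := hAB x hxΩ
    rw [← h1, ← h2]
    exact ⟨lt_trans ha hb, hsub', hA1, hB1⟩
  have hcoverP : tsupport v ⊆ ⋃ p ∈ P, Set.Ioo p.1 p.2 := by
    intro y hy
    obtain ⟨x, hxt⟩ := Set.mem_iUnion₂.mp (ht hy)
    obtain ⟨hxt1, hxt2⟩ := hxt
    by_cases hxΩ : x ∈ Ω
    · have hxt2' : y ∈ (if x ∈ Ω then Set.Ioo (A x) (B x) else ∅) := hxt2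
      rw [if_pos hxΩ] at hxt2'
      have hxt2 := hxt2'
      refine Set.mem_iUnion₂.mpr ⟨(A x, B x), ?_, hxt2⟩
      rw [hPdef, Finset.mem_image]
      exact ⟨x, Finset.mem_filter.mpr ⟨hxt1, hxΩ⟩, rfl⟩
    · have hxt2' : y ∈ (if x ∈ Ω then Set.Ioo (A x) (B x) else ∅) := hxt2
      rw [if_neg hxΩ] at hxt2'
      exact absurd hxt2' (Set.notMem_empty y)
  have hdisj : (↑P : Set (ℝ × ℝ)).PairwiseDisjoint (fun p => Set.Ioo p.1 p.2) := by
    intro p hp q hq hpq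
    rw [Function.onFun]
    rw [Set.disjoint_left]
    intro z hzp hzq
    apply hpq
    obtain ⟨x, hxΩ, hx1, hx2⟩ := hPmem p (Finset.mem_coe.mp hp)
    obtain ⟨y, hyΩ, hy1, hy2⟩ := hPmem q (Finset.mem_coe.mp hq)
    have hzx := (hAB x hxΩ).2.2.2.2.2 z (by rw [hx1, hx2]; exact hzp)
    have hzy := (hAB y hyΩ).2.2.2.2.2 z (by rw [hy1, hy2]; exact hzq)
    have hp' : p = (A z, B z) := by
      have hpx : p = (A x, B x) := Prod.ext hx1.symm hx2.symm
      rw [hpx, hzx.1, hzx.2]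
    have hq' : q = (A z, B z) := by
      have hqy : q = (A y, B y) := Prod.ext hy1.symm hy2.symm
      rw [hqy, hzy.1, hzy.2]
    rw [hp', hq']
  -- splitting the integrals
  have heq1 : ∫ x, ρ x * v x = ∑ p ∈ P, ∫ x in Set.Ioo p.1 p.2, ρ x * v x := by
    have h1 : ∫ x in (⋃ p ∈ P, Set.Ioo p.1 p.2), ρ x * v x = ∫ x, ρ x * v x := by
      apply setIntegral_eq_integral_of_forall_compl_eq_zero
      intro x hx
      rw [image_eq_zero_of_notMem_tsupport (fun hK => hx (hcoverP hK)), mul_zero]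
    rw [← h1]
    exact integral_biUnion_finset P (fun p _ => measurableSet_Ioo) hdisj
      (fun p _ => hρv_int.integrableOn)
  have hle2 : ∑ p ∈ P, ∫ x in Set.Ioo p.1 p.2, (deriv (deriv v) x)^2
      ≤ ∫ x, (deriv (deriv v) x)^2 := by
    rw [← integral_biUnion_finset P (fun p _ => measurableSet_Ioo) hdisj
      (fun p _ => hv2_int.integrableOn)]
    exact setIntegral_le_integral hv2_int (Filter.Eventually.of_forall (fun x => sq_nonneg _))
  -- per-interval estimate
  have hper : ∀ p ∈ P, ∫ x in Set.Ioo p.1 p.2, ρ x * v x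
      ≤ (1/2) * (∫ x in Set.Ioo p.1 p.2, (deriv (deriv v) x)^2) + (p.2-p.1)^5/1440 := by
    intro p hp
    obtain ⟨hlt, _, h1Ω, h2Ω⟩ := hPprop p hp
    have h1K : p.1 ∉ tsupport v := fun h => h1Ω (hsub h)
    have h2K : p.2 ∉ tsupport v := fun h => h2Ω (hsub h)
    apply interval_compliance p.1 p.2 hlt ρ v hρmeas hρ hv'
    · exact image_eq_zero_of_notMem_tsupport h1K
    · by_contra h
      exact h1K (support_deriv_subset (Function.mem_support.mpr h))
    · exact image_eq_zero_of_notMem_tsupport h2K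
    · by_contra h
      exact h2K (support_deriv_subset (Function.mem_support.mpr h))
  -- total length bound
  have hlen_nonneg : ∀ p ∈ P, 0 ≤ p.2 - p.1 := fun p hp => by
    linarith [(hPprop p hp).1]
  have hlen : ∑ p ∈ P, (p.2 - p.1) ≤ 2*R := by
    have hU : (⋃ p ∈ P, Set.Ioo p.1 p.2) ⊆ Ω := by
      apply Set.iUnion₂_subset
      intro p hp
      exact (hPprop p (by exact_mod_cast hp)).2.1
    have hm : volume (⋃ p ∈ P, Set.Ioo p.1 p.2) = ∑ p ∈ P, ENNReal.ofReal (p.2 - p.1) := by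
      rw [measure_biUnion_finset hdisj (fun p _ => measurableSet_Ioo)]
      congr 1
      funext p
      exact Real.volume_Ioo
    have hmono := measure_mono (μ := volume) hU
    rw [hm, hvol] at hmono
    rw [← ENNReal.ofReal_sum_of_nonneg hlen_nonneg] at hmono
    exact (ENNReal.ofReal_le_ofReal_iff (by positivity)).mp hmono
  have hpow : ∑ p ∈ P, (p.2-p.1)^5 ≤ 32 * R^5 := by
    calc ∑ p ∈ P, (p.2-p.1)^5 ≤ (∑ p ∈ P, (p.2-p.1))^5 := pow5_sum P _ hlen_nonneg
      _ ≤ (2*R)^5 := pow_le_pow_left₀ (Finset.sum_nonneg hlen_nonneg) hlen 5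
      _ = 32 * R^5 := by ring
  -- assembling
  have hmain : ∫ x, ρ x * v x ≤ (1/2) * (∫ x, (deriv (deriv v) x)^2) + R^5/45 := by
    calc ∫ x, ρ x * v x = ∑ p ∈ P, ∫ x in Set.Ioo p.1 p.2, ρ x * v x := heq1
      _ ≤ ∑ p ∈ P, ((1/2) * (∫ x in Set.Ioo p.1 p.2, (deriv (deriv v) x)^2)
            + (p.2-p.1)^5/1440) := Finset.sum_le_sum hper
      _ = (1/2) * (∑ p ∈ P, ∫ x in Set.Ioo p.1 p.2, (deriv (deriv v) x)^2)
            + (∑ p ∈ P, (p.2-p.1)^5)/1440 := by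
          rw [Finset.sum_add_distrib, Finset.mul_sum, Finset.sum_div]
      _ ≤ (1/2) * (∫ x, (deriv (deriv v) x)^2) + (32 * R^5)/1440 := by
          have h1 := hle2
          have h2 := hpow
          linarith
      _ = (1/2) * (∫ x, (deriv (deriv v) x)^2) + R^5/45 := by ring
  linarith
end

section
/- Let N ≥ 1 be an integer and let a, b, R > 0 satisfy a^N + b^N = R^N. Set X = N a^{2N+4} + 2 a^N b^N ( (N+2)(a⁴ + b⁴) + (N+4) a² b² ) + N b^{2N+4}. Then for all real numbers c, d satisfying 2(N+2) a^N c − a^{N+2} = 2(N+2) b^N d − b^{N+2}, one has a^N ( (N+6) a⁴ / ((N+2)(N+4)) − 4 a² c + 4 N c² ) + b^N ( (N+6) b⁴ / ((N+2)(N+4)) − 4 b² d + 4 N d² ) ≥ − 4X / ( N (N+2)² (N+4) R^N ), with equality when c = ( N a^{N+2} + (N+2) a² b^N + 2 b^{N+2} ) / ( 2N(N+2) R^N ) and d = ( 2 a^{N+2} + (N+2) a^N b² + N b^{N+2} ) / ( 2N(N+2) R^N ). -/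
set_option maxHeartbeats 1000000


/-- The explicit constrained quadratic minimization for the two-ball auxiliary
problem with variable load: under the constraint
`2(N+2)a^N c − a^{N+2} = 2(N+2)b^N d − b^{N+2}` (with `a^N + b^N = R^N`), the
quadratic energy is at least `−4X/(N(N+2)²(N+4)R^N)`, with equality at the
stated values of `c` and `d`. -/
theorem stmt_14 (N : ℕ) (hN : 1 ≤ N) (a b R : ℝ) (ha : 0 < a) (hb : 0 < b) (hR : 0 < R)
    (habR : a^N + b^N = R^N)
    (X : ℝ)
    (hX : X = (N:ℝ)*a^(2*N+4)
        + 2*a^N*b^N*(((N:ℝ)+2)*(a^4 + b^4) + ((N:ℝ)+4)*a^2*b^2) + (N:ℝ)*b^(2*N+4)) :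
    (∀ c d : ℝ, 2*((N:ℝ)+2)*a^N*c - a^(N+2) = 2*((N:ℝ)+2)*b^N*d - b^(N+2) →
      a^N*(((N:ℝ)+6)*a^4/(((N:ℝ)+2)*((N:ℝ)+4)) - 4*a^2*c + 4*(N:ℝ)*c^2)
        + b^N*(((N:ℝ)+6)*b^4/(((N:ℝ)+2)*((N:ℝ)+4)) - 4*b^2*d + 4*(N:ℝ)*d^2)
      ≥ -(4*X) / ((N:ℝ)*((N:ℝ)+2)^2*((N:ℝ)+4)*R^N)) ∧
    (∀ c d : ℝ,
      c = ((N:ℝ)*a^(N+2) + ((N:ℝ)+2)*a^2*b^N + 2*b^(N+2)) / (2*(N:ℝ)*((N:ℝ)+2)*R^N) →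
      d = (2*a^(N+2) + ((N:ℝ)+2)*a^N*b^2 + (N:ℝ)*b^(N+2)) / (2*(N:ℝ)*((N:ℝ)+2)*R^N) →
      2*((N:ℝ)+2)*a^N*c - a^(N+2) = 2*((N:ℝ)+2)*b^N*d - b^(N+2) ∧
      a^N*(((N:ℝ)+6)*a^4/(((N:ℝ)+2)*((N:ℝ)+4)) - 4*a^2*c + 4*(N:ℝ)*c^2)
        + b^N*(((N:ℝ)+6)*b^4/(((N:ℝ)+2)*((N:ℝ)+4)) - 4*b^2*d + 4*(N:ℝ)*d^2)
      = -(4*X) / ((N:ℝ)*((N:ℝ)+2)^2*((N:ℝ)+4)*R^N)) := by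
  have hn : (1:ℝ) ≤ (N:ℝ) := by exact_mod_cast hN
  have hn0 : (0:ℝ) < (N:ℝ) := by linarith
  have hA : 0 < a^N := pow_pos ha N
  have hB : 0 < b^N := pow_pos hb N
  have hS : (0:ℝ) < a^N + b^N := by linarith
  have hn2 : (0:ℝ) < (N:ℝ)+2 := by linarith
  have hn4 : (0:ℝ) < (N:ℝ)+4 := by linarith
  have ea : a^(N+2) = a^N * a^2 := pow_add a N 2
  have eb : b^(N+2) = b^N * b^2 := pow_add b N 2
  have ea4 : a^(2*N+4) = (a^N)^2 * a^4 := by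
    rw [pow_add, mul_comm 2 N, pow_mul]
  have eb4 : b^(2*N+4) = (b^N)^2 * b^4 := by
    rw [pow_add, mul_comm 2 N, pow_mul]
  rw [← habR] at *
  set n := (N:ℝ) with hndef
  set A := a^N with hAdef
  set B := b^N with hBdef
  -- optimal values
  set c₀ : ℝ := (n*A*a^2 + (n+2)*a^2*B + 2*B*b^2) / (2*n*(n+2)*(A+B)) with hc0
  set d₀ : ℝ := (2*A*a^2 + (n+2)*A*b^2 + n*B*b^2) / (2*n*(n+2)*(A+B)) with hd0
  have hAne : A ≠ 0 := ne_of_gt hA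
  have hBne : B ≠ 0 := ne_of_gt hB
  have hSne : A + B ≠ 0 := ne_of_gt hS
  have hnne : n ≠ 0 := ne_of_gt hn0
  have hn2ne : n + 2 ≠ 0 := ne_of_gt hn2
  have hn4ne : n + 4 ≠ 0 := ne_of_gt hn4
  -- main algebraic identity
  have key : ∀ c d : ℝ,
      A*((n+6)*a^4/((n+2)*(n+4)) - 4*a^2*c + 4*n*c^2)
        + B*((n+6)*b^4/((n+2)*(n+4)) - 4*b^2*d + 4*n*d^2)
      = -(4*X) / (n*(n+2)^2*(n+4)*(A+B))
        + 4*n*(A*(c-c₀)^2 + B*(d-d₀)^2)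
        + 8*(B*b^2 - A*a^2)/((n+2)*(A+B)) * (A*(c-c₀) - B*(d-d₀)) := by
    intro c d
    rw [hX, ea4, eb4, hc0, hd0]
    field_simp
    ring
  have hcon0 : 2*(n+2)*A*c₀ - A*a^2 = 2*(n+2)*B*d₀ - B*b^2 := by
    rw [hc0, hd0]
    field_simp
    ring
  constructor
  · intro c d hcd
    rw [ea, eb] at hcd
    have huv : A*(c-c₀) - B*(d-d₀) = 0 := by
      have h2 : 2*(n+2)*(A*(c-c₀) - B*(d-d₀)) = 0 := by
        linear_combination hcd - hcon0
      have h2ne : (2:ℝ)*(n+2) ≠ 0 := by positivity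
      exact (mul_eq_zero.mp h2).resolve_left h2ne
    rw [key c d, huv]
    have h1 : 0 ≤ 4*n*(A*(c-c₀)^2 + B*(d-d₀)^2) := by positivity
    linarith
  · intro c d hc hd
    rw [ea, eb] at hc hd ⊢
    have hcc : c = c₀ := by rw [hc, hc0]; ring_nf
    have hdd : d = d₀ := by rw [hd, hd0]; ring_nf
    constructor
    · rw [hcc, hdd]; exact hcon0
    · rw [key c d, hcc, hdd]; ring
end

section
/- Let N ≥ 1 be an integer and a > 0. Suppose f : ℝ^N → ℝ is four times continuously differentiable on a neighborhood of the closed ball {|x| ≤ a}, is radial in the sense that f(x) = φ(|x|) for a function φ : [0, a] → ℝ, satisfies Δ(Δf)(x) = 1 for all |x| < a, and satisfies ∫_{|x|<a} Δf dx ≤ 0. Then φ′(r) < 0 for all r ∈ (0, a). Moreover, if b > 0 and g : ℝ^N → ℝ is four times continuously differentiable on a neighborhood of {|x| ≤ b}, radial with g(x) = ψ(|x|), satisfies Δ(Δg)(x) = 0 for all |x| < b and ∫_{|x|<b} Δg dx ≤ 0, then Δg is constant on {|x| < b} and ψ′(r) ≤ 0 for all r ∈ (0, b). -/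
/-
Writing `f x = φ ‖x‖`, the Laplacian of a radial function is again radial, with profile
`φ'' + (N - 1) φ' / r`. Hence `Δ(Δf) = κ` is the ODE `(r ^ (N - 1) W')' = κ r ^ (N - 1)` for
the profile `W` of `Δf`, and `(r ^ (N - 1) φ')' = r ^ (N - 1) W`. The profiles of `f` and `Δf`
along a line through the origin are even and `C¹`, so `W'` and `φ'` tend to `0` at `0⁺`, which
kills both constants of integration: `Δf = κ ‖x‖² / (2N) + k` and
`φ' r = κ r³ / (2N(N + 2)) + k r / N`. Integrating `Δf` over the ball in polar coordinates turns
`∫ Δf ≤ 0` into `k ≤ -κ a² / (2(N + 2))`, which makes `φ'` negative for `κ = 1` and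
nonpositive for `κ = 0`.
-/

open MeasureTheory Real

open Set Metric Filter Topology

theorem eqOn_zero_of_hasDerivAt_zero_of_tendsto {F : ℝ → ℝ} {R : ℝ}
    (hF : ∀ s ∈ Ioo 0 R, HasDerivAt F 0 s) (hF0 : Tendsto F (𝓝[>] 0) (𝓝 0)) :
    EqOn F 0 (Ioo 0 R) := by
  obtain ⟨c, hc⟩ := isOpen_Ioo.exists_is_const_of_deriv_eq_zero isPreconnected_Ioo
    (fun s hs => (hF s hs).differentiableAt.differentiableWithinAt)
    (fun s hs => (hF s hs).deriv)
  intro s hs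
  have hc0 : Tendsto F (𝓝[>] 0) (𝓝 c) :=
    tendsto_const_nhds.congr' <| eventuallyEq_comm.1 <| eventually_of_mem
      (Ioo_mem_nhdsGT (hs.1.trans hs.2)) hc
  rw [hc s hs, tendsto_nhds_unique hc0 hF0, Pi.zero_apply]

theorem eqOn_of_hasDerivAt_eq_sub_mul_div {m : ℕ} {R α β : ℝ} {p : ℝ → ℝ}
    (hp : ∀ s ∈ Ioo 0 R, HasDerivAt p (α * s ^ 2 + β - m * p s / s) s)
    (hp0 : Tendsto p (𝓝[>] 0) (𝓝 0)) :
    EqOn p (fun s => α * s ^ 3 / (m + 3) + β * s / (m + 1)) (Ioo 0 R) := by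
  set q : ℝ → ℝ := fun s => α * s ^ 3 / (m + 3) + β * s / (m + 1)
  have hq : ∀ s ≠ 0, HasDerivAt q (α * s ^ 2 + β - m * q s / s) s := by
    intro s hs
    have h1 := ((hasDerivAt_pow 3 s).const_mul α).div_const ((m : ℝ) + 3)
    have h2 := ((hasDerivAt_id s).const_mul β).div_const ((m : ℝ) + 1)
    refine (h1.add h2).congr_deriv ?_
    simp only [q]
    field_simp
    ring
  have hpow : ∀ s ≠ 0, (m : ℝ) * s ^ (m - 1) = m * s ^ m / s := by
    intro s hs
    rcases Nat.eq_zero_or_pos m with rfl | hm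
    · simp
    · rw [← pow_sub_one_mul hm.ne', mul_div_assoc, mul_div_cancel_right₀ _ hs]
  -- `s ^ m` is an integrating factor of the equation `y' + m y / s = α s ^ 2 + β`
  have hF : ∀ s ∈ Ioo 0 R, HasDerivAt (fun s => s ^ m * (p s - q s)) 0 s := by
    intro s hs
    refine ((hasDerivAt_pow m s).mul ((hp s hs).sub (hq s hs.1.ne'))).congr_deriv ?_
    rw [hpow s hs.1.ne', Pi.sub_apply]
    ring
  have hF0 : Tendsto (fun s => s ^ m * (p s - q s)) (𝓝[>] 0) (𝓝 0) := by
    have hq0 : Tendsto q (𝓝[>] 0) (𝓝 0) := by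
      have : Continuous q := by fun_prop
      simpa [q] using this.tendsto 0 |>.mono_left nhdsWithin_le_nhds
    simpa using ((continuous_pow m).tendsto 0).mono_left nhdsWithin_le_nhds |>.mul (hp0.sub hq0)
  intro s hs
  have := eqOn_zero_of_hasDerivAt_zero_of_tendsto hF hF0 hs
  simpa [sub_eq_zero, hs.1.ne'] using this

theorem deriv_eq_zero_of_even {ℓ : ℝ → ℝ} (hℓ : (fun t => ℓ (-t)) =ᶠ[𝓝 0] ℓ) :
    deriv ℓ 0 = 0 := by
  have h := hℓ.deriv_eq
  rw [deriv_comp_neg, neg_zero] at h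
  linarith

theorem ContDiffOn.hasDerivAt_of_isOpen {f : ℝ → ℝ} {s : Set ℝ} {n : WithTop ℕ∞}
    (hf : ContDiffOn ℝ n f s) (hs : IsOpen s) (hn : n ≠ 0) {x : ℝ} (hx : x ∈ s) :
    HasDerivAt f (deriv f x) x :=
  ((hf.contDiffAt (hs.mem_nhds hx)).differentiableAt hn).hasDerivAt

theorem hasFDerivAt_norm {F : Type*} [NormedAddCommGroup F] [InnerProductSpace ℝ F] {x : F}
    (hx : x ≠ 0) : HasFDerivAt (fun y : F => ‖y‖) (‖x‖⁻¹ • innerSL ℝ x) x := by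
  have h := (hasStrictFDerivAt_norm_sq x).hasFDerivAt.sqrt (by positivity)
  simp only [sqrt_sq (norm_nonneg _)] at h
  convert h using 1
  ext v
  simp
  field_simp

theorem HasDerivAt.hasFDerivAt_comp_norm {F : Type*} [NormedAddCommGroup F]
    [InnerProductSpace ℝ F] {h : ℝ → ℝ} {h' : ℝ} {x : F} (hh : HasDerivAt h h' ‖x‖)
    (hx : x ≠ 0) : HasFDerivAt (fun y => h ‖y‖) ((h' / ‖x‖) • innerSL ℝ x) x := by
  have := hh.comp_hasFDerivAt x (hasFDerivAt_norm hx)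
  rwa [smul_smul, ← div_eq_mul_inv] at this

section Radial

variable {E : Type*} [NormedAddCommGroup E] [NormedSpace ℝ E] {R : ℝ} {e : E}
  {v : E → ℝ} {w : ℝ → ℝ}

theorem ContDiffOn.comp_smul_unit {n : WithTop ℕ∞} (he : ‖e‖ = 1)
    (hv : ContDiffOn ℝ n v (ball 0 R)) :
    ContDiffOn ℝ n (fun t : ℝ => v (t • e)) (Ioo (-R) R) :=
  hv.comp (contDiff_id.smul contDiff_const).contDiffOn fun t ht => by
    simpa [norm_smul, he, abs_lt] using ht

theorem eqOn_comp_smul_unit_of_radial (he : ‖e‖ = 1)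
    (hrad : ∀ x, ‖x‖ ∈ Ioo 0 R → v x = w ‖x‖) :
    EqOn w (fun t => v (t • e)) (Ioo 0 R) := fun t ht => by
  have hnorm : ‖t • e‖ = t := by simp [norm_smul, he, abs_of_pos ht.1]
  change w t = v (t • e)
  rw [hrad (t • e) (by rwa [hnorm]), hnorm]

theorem contDiffOn_of_radial {n : WithTop ℕ∞} (he : ‖e‖ = 1)
    (hv : ContDiffOn ℝ n v (ball 0 R)) (hrad : ∀ x, ‖x‖ ∈ Ioo 0 R → v x = w ‖x‖) :
    ContDiffOn ℝ n w (Ioo 0 R) :=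
  ((hv.comp_smul_unit he).mono fun _ ht => ⟨by linarith [ht.1, ht.2], ht.2⟩).congr
    (eqOn_comp_smul_unit_of_radial he hrad)

theorem tendsto_deriv_of_radial (hR : 0 < R) (he : ‖e‖ = 1)
    (hv : ContDiffOn ℝ 1 v (ball 0 R)) (hrad : ∀ x, ‖x‖ ∈ Ioo 0 R → v x = w ‖x‖) :
    Tendsto (deriv w) (𝓝[>] 0) (𝓝 0) := by
  set ℓ : ℝ → ℝ := fun t => v (t • e)
  have hI : Ioo (-R) R ∈ 𝓝 (0 : ℝ) := Ioo_mem_nhds (neg_neg_of_pos hR) hR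
  have heven : (fun t => ℓ (-t)) =ᶠ[𝓝 0] ℓ := by
    filter_upwards [hI] with t ht
    rcases eq_or_ne t 0 with rfl | ht0
    · simp
    have hnorm : ∀ s : ℝ, ‖s • e‖ = |s| := by simp [norm_smul, he]
    have hmem : ∀ s : ℝ, |s| = |t| → ‖s • e‖ ∈ Ioo 0 R := fun s hs => by
      simpa [hnorm, hs, abs_lt] using ⟨ht0, ht⟩
    simp only [ℓ]
    rw [hrad _ (hmem _ (abs_neg t)), hrad _ (hmem t rfl), hnorm, hnorm, abs_neg]
  have hcont : ContinuousAt (deriv ℓ) 0 :=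
    ((hv.comp_smul_unit he).continuousOn_deriv_of_isOpen isOpen_Ioo le_rfl).continuousAt hI
  have hderiv : deriv w =ᶠ[𝓝[>] 0] deriv ℓ := by
    filter_upwards [Ioo_mem_nhdsGT hR] with t ht
    exact ((eqOn_comp_smul_unit_of_radial he hrad).eventuallyEq_of_mem
      (isOpen_Ioo.mem_nhds ht)).deriv_eq
  have hlim := hcont.tendsto
  rw [deriv_eq_zero_of_even heven] at hlim
  exact (hlim.mono_left nhdsWithin_le_nhds).congr' hderiv.symm

end Radial

section Integral

variable {E : Type*} [NormedAddCommGroup E] [NormedSpace ℝ E] [Nontrivial E]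
  [FiniteDimensional ℝ E] [MeasurableSpace E] [BorelSpace E] (μ : Measure E)
  [μ.IsAddHaarMeasure]

open Module

theorem setIntegral_ball_comp_norm (f : ℝ → ℝ) {a : ℝ} (ha : 0 ≤ a) :
    ∫ x in ball (0 : E) a, f ‖x‖ ∂μ =
      finrank ℝ E * μ.real (ball 0 1) * ∫ r in 0..a, r ^ (finrank ℝ E - 1) * f r := by
  have hind : (ball (0 : E) a).indicator (fun x => f ‖x‖) =
      fun x => (Iio a).indicator f ‖x‖ := by
    ext x
    simp [indicator]
  rw [← integral_indicator measurableSet_ball, hind, integral_fun_norm_addHaar μ,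
    intervalIntegral.integral_of_le ha, integral_Ioc_eq_integral_Ioo,
    ← Ioi_inter_Iio (a := (0 : ℝ)), ← setIntegral_indicator (measurableSet_Iio (a := a)),
    nsmul_eq_mul, smul_eq_mul, mul_assoc]
  congr 2
  refine setIntegral_congr_fun measurableSet_Ioi fun r _ => ?_
  by_cases hr : r < a <;> simp [hr]

theorem setIntegral_ball_quadratic_norm (c k : ℝ) {a : ℝ} (ha : 0 ≤ a) :
    ∫ x in ball (0 : E) a, (c * ‖x‖ ^ 2 + k) ∂μ =
      μ.real (ball 0 1) * a ^ finrank ℝ E *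
        (c * finrank ℝ E * a ^ 2 / (finrank ℝ E + 2) + k) := by
  obtain ⟨m, hm⟩ : ∃ m, finrank ℝ E = m + 1 :=
    ⟨_, (Nat.succ_pred_eq_of_pos finrank_pos).symm⟩
  rw [setIntegral_ball_comp_norm μ (fun r => c * r ^ 2 + k) ha, hm, Nat.add_sub_cancel]
  have hpoly : (fun r : ℝ => r ^ m * (c * r ^ 2 + k)) = fun r => c * r ^ (m + 2) + k * r ^ m := by
    ext r
    ring
  rw [hpoly, intervalIntegral.integral_add, intervalIntegral.integral_const_mul,
    intervalIntegral.integral_const_mul, integral_pow, integral_pow]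
  · push_cast
    field_simp
    ring
  all_goals exact (continuous_const.mul (continuous_pow _)).intervalIntegrable _ _

end Integral

section Euclidean

variable {N : ℕ}

theorem fderiv_apply_single_of_eventuallyEq_comp_norm {u : EuclideanSpace ℝ (Fin N) → ℝ}
    {w : ℝ → ℝ} {x : EuclideanSpace ℝ (Fin N)} (hx : x ≠ 0)
    (hu : u =ᶠ[𝓝 x] fun y => w ‖y‖) (hw : DifferentiableAt ℝ w ‖x‖) (i : Fin N) :
    fderiv ℝ u x (EuclideanSpace.single i 1) = deriv w ‖x‖ / ‖x‖ * x i := by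
  rw [hu.fderiv_eq, (hw.hasDerivAt.hasFDerivAt_comp_norm hx).fderiv]
  simp [EuclideanSpace.inner_single_right]

theorem laplacian_eq_of_eventuallyEq_comp_norm {u : EuclideanSpace ℝ (Fin N) → ℝ}
    {w : ℝ → ℝ} {x : EuclideanSpace ℝ (Fin N)} (hx : x ≠ 0)
    (hu : ∀ᶠ y in 𝓝 x, u y = w ‖y‖)
    (hw : ∀ᶠ r in 𝓝 ‖x‖, DifferentiableAt ℝ w r)
    (hw' : DifferentiableAt ℝ (deriv w) ‖x‖) :
    laplacian u x = deriv (deriv w) ‖x‖ + (N - 1) * deriv w ‖x‖ / ‖x‖ := by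
  set h : ℝ → ℝ := fun r => deriv w r / r
  set r := ‖x‖
  have hr : r ≠ 0 := norm_ne_zero_iff.2 hx
  have hh : HasDerivAt h ((deriv (deriv w) r * r - deriv w r) / r ^ 2) r := by
    simpa using hw'.hasDerivAt.fun_div (hasDerivAt_id' r) hr
  have hgrad : ∀ i, (fun y => fderiv ℝ u y (EuclideanSpace.single i 1)) =ᶠ[𝓝 x]
      fun y => h ‖y‖ * y i := by
    intro i
    have hne : ∀ᶠ y in 𝓝 x, y ≠ 0 := isOpen_ne.mem_nhds hx
    filter_upwards [hu.eventually_nhds, hne,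
      continuous_norm.continuousAt.eventually hw] with y hy hy0 hwy
    exact fderiv_apply_single_of_eventuallyEq_comp_norm hy0 hy hwy i
  have hpartial : ∀ i, fderiv ℝ (fun y => fderiv ℝ u y (EuclideanSpace.single i 1)) x
      (EuclideanSpace.single i 1) =
        h r + (deriv (deriv w) r * r - deriv w r) / r ^ 3 * x i ^ 2 := by
    intro i
    have hprod : HasFDerivAt (fun y : EuclideanSpace ℝ (Fin N) => h ‖y‖ * y i) _ x :=
      (hh.hasFDerivAt_comp_norm hx).mul (EuclideanSpace.proj (𝕜 := ℝ) i).hasFDerivAt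
    rw [(hgrad i).fderiv_eq, hprod.fderiv]
    simp [EuclideanSpace.inner_single_right]
    field_simp
    ring
  simp only [laplacian, hpartial, Finset.sum_add_distrib, ← Finset.mul_sum,
    ← EuclideanSpace.real_norm_sq_eq, Finset.sum_const, Finset.card_univ, Fintype.card_fin,
    nsmul_eq_mul, h]
  field_simp
  ring

theorem ContDiffOn.laplacian {n : ℕ} {u : EuclideanSpace ℝ (Fin N) → ℝ}
    {U : Set (EuclideanSpace ℝ (Fin N))} (hU : IsOpen U) (hu : ContDiffOn ℝ (n + 2) u U) :
    ContDiffOn ℝ n (laplacian u) U := by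
  refine ContDiffOn.sum fun i _ => ?_
  have hgrad : ContDiffOn ℝ (n + 1) (fun y => fderiv ℝ u y (EuclideanSpace.single i 1)) U :=
    (hu.fderiv_of_isOpen hU le_rfl).clm_apply contDiffOn_const
  exact (hgrad.fderiv_of_isOpen hU le_rfl).clm_apply contDiffOn_const

theorem laplacian_eq_of_radial {R : ℝ} {v : EuclideanSpace ℝ (Fin N) → ℝ} {w : ℝ → ℝ}
    (hv : ContDiffOn ℝ 2 v (ball 0 R)) (hrad : ∀ x, ‖x‖ ∈ Ioo 0 R → v x = w ‖x‖)
    {x : EuclideanSpace ℝ (Fin N)} (hx : ‖x‖ ∈ Ioo 0 R) :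
    laplacian v x = deriv (deriv w) ‖x‖ + (N - 1) * deriv w ‖x‖ / ‖x‖ := by
  have hx0 : x ≠ 0 := norm_pos_iff.1 hx.1
  have hw : ContDiffOn ℝ 2 w (Ioo 0 R) :=
    contDiffOn_of_radial (e := ‖x‖⁻¹ • x) (by simp [norm_smul, hx0]) hv hrad
  have hw' : ContDiffOn ℝ 1 (deriv w) (Ioo 0 R) := hw.deriv_of_isOpen isOpen_Ioo (by norm_num)
  refine laplacian_eq_of_eventuallyEq_comp_norm hx0 ?_ ?_
    (hw'.hasDerivAt_of_isOpen isOpen_Ioo one_ne_zero hx).differentiableAt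
  · filter_upwards [(isOpen_Ioo.preimage continuous_norm).mem_nhds hx] with y hy
    exact hrad y hy
  · filter_upwards [isOpen_Ioo.mem_nhds hx] with r hr
    exact (hw.hasDerivAt_of_isOpen isOpen_Ioo two_ne_zero hr).differentiableAt

theorem deriv_eq_of_radial_of_laplacian_eq (hN : 1 ≤ N) {R α β : ℝ} (hR : 0 < R)
    {v : EuclideanSpace ℝ (Fin N) → ℝ} {w : ℝ → ℝ} (hv : ContDiffOn ℝ 2 v (ball 0 R))
    (hrad : ∀ x, ‖x‖ ∈ Ioo 0 R → v x = w ‖x‖)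
    (hΔv : ∀ x, ‖x‖ ∈ Ioo 0 R → laplacian v x = α * ‖x‖ ^ 2 + β) :
    ∀ r ∈ Ioo 0 R, deriv w r = α * r ^ 3 / (N + 2) + β * r / N := by
  have : Nonempty (Fin N) := ⟨⟨0, hN⟩⟩
  obtain ⟨e, he⟩ := exists_norm_eq (EuclideanSpace ℝ (Fin N)) zero_le_one
  have hm : ((N - 1 : ℕ) : ℝ) = N - 1 := by rw [Nat.cast_sub hN, Nat.cast_one]
  have hw : ContDiffOn ℝ 1 (deriv w) (Ioo 0 R) :=
    (contDiffOn_of_radial he hv hrad).deriv_of_isOpen isOpen_Ioo (by norm_num)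
  have hode : ∀ r ∈ Ioo 0 R,
      HasDerivAt (deriv w) (α * r ^ 2 + β - (N - 1 : ℕ) * deriv w r / r) r := by
    intro r hr
    have hre : ‖r • e‖ ∈ Ioo 0 R ∧ ‖r • e‖ = r := by
      rw [norm_smul, he, mul_one, Real.norm_of_nonneg hr.1.le]
      exact ⟨hr, rfl⟩
    have hΔ := (laplacian_eq_of_radial hv hrad hre.1).symm.trans (hΔv _ hre.1)
    rw [hre.2] at hΔ
    refine (hw.hasDerivAt_of_isOpen isOpen_Ioo one_ne_zero hr).congr_deriv ?_
    rw [hm]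
    linarith
  intro r hr
  rw [eqOn_of_hasDerivAt_eq_sub_mul_div hode
    (tendsto_deriv_of_radial hR he (hv.of_le one_le_two) hrad) hr, hm]
  ring

theorem radial_laplacian_laplacian_eq_const (hN : 1 ≤ N) {R κ : ℝ} (hR : 0 < R)
    {u : EuclideanSpace ℝ (Fin N) → ℝ} {χ : ℝ → ℝ} (hu : ContDiffOn ℝ 4 u (ball 0 R))
    (hrad : ∀ x, ‖x‖ ∈ Ioo 0 R → u x = χ ‖x‖)
    (heq : ∀ x, ‖x‖ ∈ Ioo 0 R → laplacian (laplacian u) x = κ) :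
    ∃ k, (∀ x, ‖x‖ < R → laplacian u x = κ / (2 * N) * ‖x‖ ^ 2 + k) ∧
      ∀ r ∈ Ioo 0 R, deriv χ r = κ * r ^ 3 / (2 * N * (N + 2)) + k * r / N := by
  have : Nonempty (Fin N) := ⟨⟨0, hN⟩⟩
  obtain ⟨e, he⟩ := exists_norm_eq (EuclideanSpace ℝ (Fin N)) zero_le_one
  set W : ℝ → ℝ := fun r => deriv (deriv χ) r + (N - 1) * deriv χ r / r
  have hΔu : ContDiffOn ℝ 2 (laplacian u) (ball 0 R) := hu.laplacian (n := 2) isOpen_ball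
  have hΔrad : ∀ x, ‖x‖ ∈ Ioo 0 R → laplacian u x = W ‖x‖ := fun x hx =>
    laplacian_eq_of_radial (hu.of_le (by norm_num)) hrad hx
  have hW : ContDiffOn ℝ 2 W (Ioo 0 R) := contDiffOn_of_radial he hΔu hΔrad
  have hW' := deriv_eq_of_radial_of_laplacian_eq hN hR hΔu hΔrad (α := 0) (β := κ)
    fun x hx => by rw [heq x hx, zero_mul, zero_add]
  obtain ⟨k, hk⟩ := isOpen_Ioo.exists_eq_add_of_deriv_eq isPreconnected_Ioo
    (f := W) (g := fun r => κ / (2 * N) * r ^ 2)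
    (fun r hr => (hW.hasDerivAt_of_isOpen isOpen_Ioo two_ne_zero hr).differentiableAt
      |>.differentiableWithinAt)
    (by fun_prop) fun r hr => by
      rw [hW' r hr]
      simp
      field_simp
  have hΔu_eq : ∀ x, ‖x‖ ∈ Ioo 0 R → laplacian u x = κ / (2 * N) * ‖x‖ ^ 2 + k :=
    fun x hx => (hΔrad x hx).trans (hk hx)
  refine ⟨k, fun x hx => ?_, fun r hr => ?_⟩
  · rcases eq_or_ne x 0 with rfl | hx0
    · have hcont : ContinuousAt (laplacian u) 0 :=
        hΔu.continuousOn.continuousAt (ball_mem_nhds 0 hR)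
      refine ((hcont.eventuallyEq_nhds_iff_eventuallyEq_nhdsNE
        (g := fun x => κ / (2 * N) * ‖x‖ ^ 2 + k) (by fun_prop)).1 ?_).eq_of_nhds
      filter_upwards [self_mem_nhdsWithin, mem_nhdsWithin_of_mem_nhds (ball_mem_nhds 0 hR)]
        with y hy0 hyR
      exact hΔu_eq y ⟨norm_pos_iff.2 hy0, mem_ball_zero_iff.1 hyR⟩
    · exact hΔu_eq x ⟨norm_pos_iff.2 hx0, hx⟩
  · rw [deriv_eq_of_radial_of_laplacian_eq hN hR (hu.of_le (by norm_num)) hrad hΔu_eq r hr]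
    simp only [div_eq_mul_inv, mul_inv]
    ring

theorem radial_laplacian_laplacian_eq_const_of_setIntegral_nonpos (hN : 1 ≤ N)
    {R κ : ℝ} (hR : 0 < R) {u : EuclideanSpace ℝ (Fin N) → ℝ} {χ : ℝ → ℝ}
    (hu : ContDiffOn ℝ 4 u (ball 0 R)) (hrad : ∀ x, ‖x‖ ∈ Ioo 0 R → u x = χ ‖x‖)
    (heq : ∀ x, ‖x‖ ∈ Ioo 0 R → laplacian (laplacian u) x = κ)
    (hint : ∫ x in ball 0 R, laplacian u x ≤ 0) :
    ∃ k, k ≤ -(κ * R ^ 2 / (2 * (N + 2))) ∧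
      (∀ x, ‖x‖ < R → laplacian u x = κ / (2 * N) * ‖x‖ ^ 2 + k) ∧
      ∀ r ∈ Ioo 0 R, deriv χ r = κ * r ^ 3 / (2 * N * (N + 2)) + k * r / N := by
  obtain ⟨k, hΔu, hχ⟩ := radial_laplacian_laplacian_eq_const hN hR hu hrad heq
  refine ⟨k, ?_, hΔu, hχ⟩
  have : Nonempty (Fin N) := ⟨⟨0, hN⟩⟩
  have hball : 0 < volume.real (ball (0 : EuclideanSpace ℝ (Fin N)) 1) :=
    ENNReal.toReal_pos (measure_ball_pos volume 0 one_pos).ne' measure_ball_lt_top.ne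
  rw [setIntegral_congr_fun measurableSet_ball fun x hx => hΔu x (mem_ball_zero_iff.1 hx),
    setIntegral_ball_quadratic_norm volume _ _ hR.le, finrank_euclideanSpace_fin] at hint
  have hmean := nonpos_of_mul_nonpos_right hint (by positivity)
  have : κ / (2 * N) * N * R ^ 2 / (N + 2) = κ * R ^ 2 / (2 * (N + 2)) := by
    field_simp
  linarith

end Euclidean

/-- Radial monotonicity for the Euclidean two-ball minimizers: a radial `C⁴`
function `f` with `Δ²f = 1` in the ball of radius `a` and `∫_{B_a} Δf ≤ 0` has
strictly decreasing radial profile; and a radial `C⁴` function `g` with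
`Δ²g = 0` in the ball of radius `b` and `∫_{B_b} Δg ≤ 0` has constant Laplacian
and (weakly) decreasing radial profile. -/
theorem stmt_18 (N : ℕ) (hN : 1 ≤ N) (a : ℝ) (ha : 0 < a)
    (f : EuclideanSpace ℝ (Fin N) → ℝ) (φ : ℝ → ℝ)
    (hfreg : ∃ U : Set (EuclideanSpace ℝ (Fin N)), IsOpen U ∧
      Metric.closedBall (0 : EuclideanSpace ℝ (Fin N)) a ⊆ U ∧ ContDiffOn ℝ 4 f U)
    (hfrad : ∀ x : EuclideanSpace ℝ (Fin N), ‖x‖ ≤ a → f x = φ ‖x‖)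
    (hfeq : ∀ x : EuclideanSpace ℝ (Fin N), ‖x‖ < a → laplacian (laplacian f) x = 1)
    (hfint : (∫ x in Metric.ball (0 : EuclideanSpace ℝ (Fin N)) a, laplacian f x) ≤ 0) :
    (∀ r ∈ Set.Ioo (0:ℝ) a, deriv φ r < 0) ∧
    (∀ b : ℝ, 0 < b → ∀ (g : EuclideanSpace ℝ (Fin N) → ℝ) (ψ : ℝ → ℝ),
      (∃ U : Set (EuclideanSpace ℝ (Fin N)), IsOpen U ∧
        Metric.closedBall (0 : EuclideanSpace ℝ (Fin N)) b ⊆ U ∧ ContDiffOn ℝ 4 g U) →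
      (∀ x : EuclideanSpace ℝ (Fin N), ‖x‖ ≤ b → g x = ψ ‖x‖) →
      (∀ x : EuclideanSpace ℝ (Fin N), ‖x‖ < b → laplacian (laplacian g) x = 0) →
      (∫ x in Metric.ball (0 : EuclideanSpace ℝ (Fin N)) b, laplacian g x) ≤ 0 →
      (∃ k : ℝ, ∀ x : EuclideanSpace ℝ (Fin N), ‖x‖ < b → laplacian g x = k) ∧
      (∀ r ∈ Set.Ioo (0:ℝ) b, deriv ψ r ≤ 0)) := by
  have hN0 : (0 : ℝ) < N := by exact_mod_cast hN
  obtain ⟨U, -, hUa, hf⟩ := hfreg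
  obtain ⟨k, hk, -, hφ⟩ := radial_laplacian_laplacian_eq_const_of_setIntegral_nonpos hN ha
    (hf.mono (ball_subset_closedBall.trans hUa)) (fun x hx => hfrad x hx.2.le)
    (fun x hx => hfeq x hx.2) hfint
  refine ⟨fun r hr => ?_, fun b hb g ψ ⟨V, _, hVb, hg⟩ hgrad hgeq hgint => ?_⟩
  · have hr2 : r * (r ^ 2 - a ^ 2) < 0 := mul_neg_of_pos_of_neg hr.1 (by nlinarith [hr.1, hr.2])
    calc deriv φ r = 1 * r ^ 3 / (2 * N * (N + 2)) + k * r / N := hφ r hr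
      _ ≤ 1 * r ^ 3 / (2 * N * (N + 2)) + -(1 * a ^ 2 / (2 * (N + 2))) * r / N := by
        gcongr
        exact hr.1.le
      _ = r * (r ^ 2 - a ^ 2) / (2 * N * (N + 2)) := by
        field_simp
        ring
      _ < 0 := div_neg_of_neg_of_pos hr2 (by positivity)
  · obtain ⟨k, hk, hΔg, hψ⟩ := radial_laplacian_laplacian_eq_const_of_setIntegral_nonpos hN
      hb (hg.mono (ball_subset_closedBall.trans hVb)) (fun x hx => hgrad x hx.2.le)
      (fun x hx => hgeq x hx.2) hgint
    refine ⟨⟨k, fun x hx => by simpa using hΔg x hx⟩, fun r hr => ?_⟩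
    rw [hψ r hr, zero_mul, zero_div, zero_add]
    simp only [zero_mul, zero_div, neg_zero] at hk
    exact div_nonpos_of_nonpos_of_nonneg (mul_nonpos_of_nonpos_of_nonneg hk hr.1.le) hN0.le
end
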